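/- arXiv:2006.07441 — 12 statements merged into one kernel-verified Lean document; each statement's English description precedes it below -/
import Mathlib

section
/- For every nonincreasing sequence (a_n) of nonnegative reals with a_1 ≥ a_2 ≥ … ≥ 0, one has ∑_{n=1}^∞ (1/n · ∑_{k=n}^∞ a_k²)^{1/2} ≤ (π/2) · ∑_{n=1}^∞ a_n. -/
/-!
Write `a (i + 1) = ∑_{m ≥ i} d m` with the nonnegative increments `d m = a (m + 1) - a (m + 2)`.
By Minkowski's inequality in `ℓ²`, the `n`-th term on the left is at most
`∑_m d m √((m + 1 - n)₊ / (n + 1))`, so after exchanging the sums everything reduces to the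
elementary bound `∑_{n < M} √((M - n) / (n + 1)) ≤ π M / 2` for the indicator sequences.
Pairing `n` with `M - 1 - n` turns that sum into `(M + 1) / 2` times
`∑_{1 ≤ j ≤ M} 1 / √(j (L - j))`, `L = M + 1`. This integrand is midpoint convex, so each
term is at most its integral over `[j - 1/2, j + 1/2]`; with the primitive `arcsin (2 y / L - 1)`
the total is `2 arcsin (M / L) ≤ π M / L` by Jordan's inequality.
-/

open Real Finset Filter Topology MeasureTheory
open scoped ENNReal

theorem Real.arcsin_le_pi_div_two_mul {x : ℝ} (hx0 : 0 ≤ x) (hx1 : x ≤ 1) :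
    arcsin x ≤ π / 2 * x := by
  have h := mul_le_sin (arcsin_nonneg.2 hx0) (arcsin_le_pi_div_two x)
  rw [sin_arcsin (by linarith) hx1] at h
  calc arcsin x = π / 2 * (2 / π * arcsin x) := by field_simp
    _ ≤ π / 2 * x := by gcongr

theorem hasDerivAt_arcsin_two_mul_div_sub_one {L x : ℝ} (hx : 0 < x) (hxL : x < L) :
    HasDerivAt (fun y => arcsin (2 * y / L - 1)) (√(x * (L - x)))⁻¹ x := by
  have hL : 0 < L := hx.trans hxL
  have hlin : HasDerivAt (fun y => 2 * y / L - 1) (2 / L) x := by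
    simpa using (((hasDerivAt_id x).const_mul 2).div_const L).sub_const 1
  have hlo : 2 * x / L - 1 ≠ -1 := by
    intro h; field_simp at h; linarith
  have hhi : 2 * x / L - 1 ≠ 1 := by
    intro h; field_simp at h; linarith
  refine ((hasDerivAt_arcsin hlo hhi).comp x hlin).congr_deriv ?_
  have : 1 - (2 * x / L - 1) ^ 2 = (2 / L) ^ 2 * (x * (L - x)) := by field_simp; ring
  rw [this, sqrt_mul (by positivity), sqrt_sq (by positivity)]
  field_simp

theorem two_mul_inv_sqrt_le_add {L x t : ℝ} (ht : 0 ≤ t) (htx : t < x) (hxt : x + t < L) :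
    2 * (√(x * (L - x)))⁻¹ ≤
      (√((x + t) * (L - (x + t))))⁻¹ + (√((x - t) * (L - (x - t))))⁻¹ := by
  have hA : 0 < (x + t) * (L - (x + t)) := by nlinarith
  have hB : 0 < (x - t) * (L - (x - t)) := by nlinarith
  have hC : 0 < x * (L - x) := by nlinarith
  have hABC : ((x + t) * (L - (x + t))) * ((x - t) * (L - (x - t))) ≤ (x * (L - x)) ^ 2 := by
    have : (x * (L - x)) ^ 2 - ((x + t) * (L - (x + t))) * ((x - t) * (L - (x - t)))
        = t ^ 2 * ((x - t) * (x + t) + (L - x) ^ 2) := by ring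
    nlinarith [mul_nonneg (sq_nonneg t) (add_nonneg (mul_nonneg (sub_nonneg.2 htx.le)
      (by linarith : 0 ≤ x + t)) (sq_nonneg (L - x)))]
  obtain ⟨u, hu, hu2⟩ : ∃ u, 0 < u ∧ u ^ 2 = (x + t) * (L - (x + t)) :=
    ⟨_, sqrt_pos.2 hA, sq_sqrt hA.le⟩
  obtain ⟨v, hv, hv2⟩ : ∃ v, 0 < v ∧ v ^ 2 = (x - t) * (L - (x - t)) :=
    ⟨_, sqrt_pos.2 hB, sq_sqrt hB.le⟩
  obtain ⟨w, hw, hw2⟩ : ∃ w, 0 < w ∧ w ^ 2 = x * (L - x) :=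
    ⟨_, sqrt_pos.2 hC, sq_sqrt hC.le⟩
  rw [← hu2, ← hv2, ← hw2, sqrt_sq hu.le, sqrt_sq hv.le, sqrt_sq hw.le]
  rw [← hu2, ← hv2, ← hw2] at hABC
  have huv : u * v ≤ w ^ 2 := by nlinarith [mul_pos hu hv]
  rw [inv_add_inv hu.ne' hv.ne', ← div_eq_mul_inv, div_le_div_iff₀ hw (by positivity)]
  refine (pow_le_pow_iff_left₀ (by positivity) (by positivity) two_ne_zero).1 ?_
  nlinarith [sq_nonneg (u - v), mul_pos hu hv]

theorem two_mul_mul_le_sub_of_hasDerivAt {f G : ℝ → ℝ} {x h : ℝ} (hh : 0 ≤ h)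
    (hG : ∀ y ∈ Set.Icc (x - h) (x + h), HasDerivAt G (f y) y)
    (hf : ∀ t ∈ Set.Icc 0 h, 2 * f x ≤ f (x + t) + f (x - t)) :
    2 * h * f x ≤ G (x + h) - G (x - h) := by
  set φ : ℝ → ℝ := fun t => G (x + t) - G (x - t) - 2 * t * f x
  have hφ : ∀ t ∈ Set.Icc 0 h, HasDerivAt φ (f (x + t) + f (x - t) - 2 * f x) t := by
    intro t ⟨ht0, hth⟩
    have hplus :=
      (hG (x + t) ⟨by linarith, by linarith⟩).comp t ((hasDerivAt_id t).const_add x)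
    have hminus :=
      (hG (x - t) ⟨by linarith, by linarith⟩).comp t ((hasDerivAt_id t).const_sub x)
    have hφ_eq : φ = G ∘ (x + ·) - G ∘ (x - ·) - fun s => id s * (2 * f x) := by
      funext s; simp only [φ, Pi.sub_apply, Function.comp_apply, id]; ring
    rw [hφ_eq]
    exact ((hplus.sub hminus).sub ((hasDerivAt_id t).mul_const (2 * f x))).congr_deriv (by ring)
  have hmono : MonotoneOn φ (Set.Icc 0 h) :=
    monotoneOn_of_hasDerivWithinAt_nonneg (convex_Icc (0 : ℝ) h)
      (fun t ht => (hφ t ht).continuousAt.continuousWithinAt)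
      (fun t ht => (hφ t (interior_subset ht)).hasDerivWithinAt)
      (fun t ht => sub_nonneg.2 (hf t (interior_subset ht)))
  have := hmono ⟨le_rfl, hh⟩ ⟨hh, le_rfl⟩ hh
  simp only [φ, add_zero, sub_zero, sub_self, mul_zero, zero_mul] at this
  linarith

theorem sum_range_inv_sqrt_le (M : ℕ) :
    ∑ n ∈ range M, (√((n + 1) * (M - n : ℝ)))⁻¹ ≤ 2 * arcsin (M / (M + 1)) := by
  set L : ℝ := M + 1 with hL
  set G : ℝ → ℝ := fun y => arcsin (2 * y / L - 1) with hG
  have hterm : ∀ n ∈ range M,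
      (√((n + 1) * (M - n : ℝ)))⁻¹ ≤
        G (((n + 1 : ℕ) : ℝ) + 1 / 2) - G ((n : ℝ) + 1 / 2) := by
    intro n hn
    have hnM : (n : ℝ) + 1 ≤ M := by exact_mod_cast mem_range.1 hn
    have hmid := two_mul_mul_le_sub_of_hasDerivAt (f := fun y => (√(y * (L - y)))⁻¹) (G := G)
      (x := n + 1) (h := 1 / 2) (by norm_num)
      (fun y hy => hasDerivAt_arcsin_two_mul_div_sub_one (by linarith [hy.1]) (by linarith [hy.2]))
      (fun t ht => two_mul_inv_sqrt_le_add ht.1 (by linarith [ht.2]) (by linarith [ht.2]))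
    convert hmid using 2
    · rw [hL]; ring_nf
    · push_cast; ring_nf
    · ring_nf
  calc ∑ n ∈ range M, (√((n + 1) * (M - n : ℝ)))⁻¹
      ≤ ∑ n ∈ range M, (G (((n + 1 : ℕ) : ℝ) + 1 / 2) - G ((n : ℝ) + 1 / 2)) :=
        sum_le_sum hterm
    _ = G (M + 1 / 2) - G (0 + 1 / 2) := by
      simpa using sum_range_sub (fun n : ℕ => G ((n : ℝ) + 1 / 2)) M
    _ = 2 * arcsin (M / L) := by
      have hL0 : L ≠ 0 := by positivity
      have h1 : 2 * (M + 1 / 2) / L - 1 = M / L := by field_simp; ring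
      have h2 : 2 * (0 + 1 / 2) / L - 1 = -(M / L) := by field_simp; ring
      simp only [hG, h1, h2, arcsin_neg]
      ring

theorem Real.sqrt_div_add_sqrt_div {p q : ℝ} (hp : 0 < p) (hq : 0 < q) :
    √(p / q) + √(q / p) = (p + q) * (√(q * p))⁻¹ := by
  have hsp := sqrt_pos.2 hp
  have hsq := sqrt_pos.2 hq
  rw [sqrt_div hp.le, sqrt_div hq.le, sqrt_mul hq.le]
  field_simp
  rw [sq_sqrt hp.le, sq_sqrt hq.le, add_comm]

theorem sum_range_sqrt_div_le (M : ℕ) :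
    ∑ n ∈ range M, √(((M - n : ℕ) : ℝ) / (n + 1)) ≤ π / 2 * M := by
  have hpair : ∀ n ∈ range M, √(((M - n : ℕ) : ℝ) / (n + 1))
      + √(((M - (M - 1 - n) : ℕ) : ℝ) / ((M - 1 - n : ℕ) + 1))
      = (M + 1) * (√((n + 1) * (M - n : ℝ)))⁻¹ := by
    intro n hn
    have hnM := mem_range.1 hn
    have hnM' : (n : ℝ) < M := by exact_mod_cast hnM
    rw [Nat.cast_sub hnM.le, show M - (M - 1 - n) = n + 1 by omega,
      Nat.cast_sub (by omega), Nat.cast_sub (by omega)]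
    push_cast
    rw [show (M : ℝ) - 1 - n + 1 = M - n by ring,
      sqrt_div_add_sqrt_div (by linarith) (by positivity)]
    ring_nf
  have hsum := sum_range_inv_sqrt_le M
  have harcsin := arcsin_le_pi_div_two_mul (x := M / (M + 1)) (by positivity)
    ((div_le_one (by positivity)).2 (by linarith))
  have hdouble : 2 * ∑ n ∈ range M, √(((M - n : ℕ) : ℝ) / (n + 1))
      = (M + 1) * ∑ n ∈ range M, (√((n + 1) * (M - n : ℝ)))⁻¹ := by
    rw [two_mul]
    nth_rewrite 2 [← sum_range_reflect]
    rw [← sum_add_distrib, mul_sum]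
    exact sum_congr rfl hpair
  have : (M + 1 : ℝ) * (π / 2 * (M / (M + 1))) = π / 2 * M := by field_simp
  nlinarith [show (0 : ℝ) < M + 1 by positivity]

namespace ENNReal

theorem inner_le_L2_mul_L2_tsum {ι : Type*} (f g : ι → ℝ≥0∞) :
    ∑' i, f i * g i ≤
      (∑' i, f i ^ (2 : ℝ)) ^ ((1 : ℝ) / 2) *
        (∑' i, g i ^ (2 : ℝ)) ^ ((1 : ℝ) / 2) := by
  let _ : MeasurableSpace ι := ⊤
  have h := lintegral_mul_le_Lp_mul_Lq Measure.count Real.HolderConjugate.two_two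
    measurable_from_top.aemeasurable measurable_from_top.aemeasurable (f := f) (g := g)
  simpa only [lintegral_count' measurable_from_top, Pi.mul_apply] using h

theorem tsum_rpow_two_eq_tsum_tsum_mul {ι : Type*} (x : ι → ℝ≥0∞) :
    (∑' i, x i) ^ (2 : ℝ) = ∑' i, ∑' j, x i * x j := by
  rw [rpow_two, sq, ← ENNReal.tsum_mul_right]
  simp_rw [← ENNReal.tsum_mul_left]

theorem L2_tsum_le_tsum_L2 {ι κ : Type*} (g : ι → κ → ℝ≥0∞) :
    (∑' k, (∑' i, g i k) ^ (2 : ℝ)) ^ ((1 : ℝ) / 2) ≤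
      ∑' i, (∑' k, g i k ^ (2 : ℝ)) ^ ((1 : ℝ) / 2) := by
  set N : ι → ℝ≥0∞ := fun i => (∑' k, g i k ^ (2 : ℝ)) ^ ((1 : ℝ) / 2)
  suffices h : ∑' k, (∑' i, g i k) ^ (2 : ℝ) ≤ (∑' i, N i) ^ (2 : ℝ) by
    calc _ ≤ ((∑' i, N i) ^ (2 : ℝ)) ^ ((1 : ℝ) / 2) := rpow_le_rpow h (by norm_num)
      _ = ∑' i, N i := by rw [one_div, rpow_rpow_inv two_ne_zero]
  calc ∑' k, (∑' i, g i k) ^ (2 : ℝ) = ∑' i, ∑' j, ∑' k, g i k * g j k := by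
        simp_rw [tsum_rpow_two_eq_tsum_tsum_mul]
        rw [ENNReal.tsum_comm]
        exact tsum_congr fun i => ENNReal.tsum_comm
    _ ≤ ∑' i, ∑' j, N i * N j :=
        ENNReal.tsum_le_tsum fun i => ENNReal.tsum_le_tsum fun j => inner_le_L2_mul_L2_tsum _ _
    _ = (∑' i, N i) ^ (2 : ℝ) := (tsum_rpow_two_eq_tsum_tsum_mul N).symm

theorem tsum_ite_add_le (n m : ℕ) (x : ℝ≥0∞) :
    ∑' k, (if n + k ≤ m then x else 0) = (m + 1 - n : ℕ) * x := by
  rw [tsum_eq_sum (s := range (m + 1 - n)) fun k hk => if_neg (by simp at hk; omega),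
    sum_congr rfl fun k hk => if_pos (by simp at hk; omega), sum_const, card_range, nsmul_eq_mul]

theorem L2_tsum_tsum_ite_le (d : ℕ → ℝ≥0∞) (n : ℕ) :
    (∑' k, (∑' m, if n + k ≤ m then d m else 0) ^ (2 : ℝ)) ^ ((1 : ℝ) / 2) ≤
      ∑' m, ((m + 1 - n : ℕ) : ℝ≥0∞) ^ ((1 : ℝ) / 2) * d m := by
  refine (L2_tsum_le_tsum_L2 _).trans_eq (tsum_congr fun m => ?_)
  have hsq : ∀ k, (if n + k ≤ m then d m else 0) ^ (2 : ℝ) =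
      if n + k ≤ m then d m ^ (2 : ℝ) else 0 := fun k => by split_ifs <;> simp
  rw [tsum_congr hsq, tsum_ite_add_le, mul_rpow_of_nonneg _ _ (by norm_num), ← rpow_mul]
  norm_num

theorem tsum_rpow_inv_mul_rpow_sub_le (m : ℕ) :
    ∑' n : ℕ, (1 / ((n + 1 : ℕ) : ℝ≥0∞)) ^ ((1 : ℝ) / 2) *
        ((m + 1 - n : ℕ) : ℝ≥0∞) ^ ((1 : ℝ) / 2)
      ≤ ENNReal.ofReal (π / 2) * (m + 1 : ℕ) := by
  have hterm : ∀ n : ℕ, (1 / ((n + 1 : ℕ) : ℝ≥0∞)) ^ ((1 : ℝ) / 2) *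
      ((m + 1 - n : ℕ) : ℝ≥0∞) ^ ((1 : ℝ) / 2) =
      ENNReal.ofReal (√(((m + 1 - n : ℕ) : ℝ) / (n + 1))) := by
    intro n
    rw [sqrt_eq_rpow, ← ofReal_rpow_of_nonneg (by positivity) (by norm_num),
      ofReal_div_of_pos (by positivity), ← mul_rpow_of_nonneg _ _ (by norm_num), mul_comm,
      ← div_eq_mul_one_div]
    congr 2
    · exact (ofReal_natCast _).symm
    · rw [← ofReal_natCast]; push_cast; rfl
  rw [tsum_congr hterm, tsum_eq_sum (s := range (m + 1)) fun n hn => by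
      simp at hn; simp [Nat.sub_eq_zero_of_le hn],
    ← ofReal_sum_of_nonneg fun n _ => sqrt_nonneg _, ← ofReal_natCast,
    ← ofReal_mul (by positivity)]
  exact ofReal_le_ofReal (sum_range_sqrt_div_le (m + 1))

theorem stechkin_q2_of_layers (d : ℕ → ℝ≥0∞) :
    ∑' n : ℕ, ((1 / ((n + 1 : ℕ) : ℝ≥0∞)) *
        ∑' k, (∑' m, if n + k ≤ m then d m else 0) ^ (2 : ℝ)) ^ ((1 : ℝ) / 2)
      ≤ ENNReal.ofReal (π / 2) * ∑' i, ∑' m, if i ≤ m then d m else 0 := by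
  calc ∑' n : ℕ, ((1 / ((n + 1 : ℕ) : ℝ≥0∞)) *
        ∑' k, (∑' m, if n + k ≤ m then d m else 0) ^ (2 : ℝ)) ^ ((1 : ℝ) / 2)
      = ∑' n : ℕ, (1 / ((n + 1 : ℕ) : ℝ≥0∞)) ^ ((1 : ℝ) / 2) *
        (∑' k, (∑' m, if n + k ≤ m then d m else 0) ^ (2 : ℝ)) ^ ((1 : ℝ) / 2) :=
        tsum_congr fun n => mul_rpow_of_nonneg _ _ (by norm_num)
    _ ≤ ∑' n : ℕ, (1 / ((n + 1 : ℕ) : ℝ≥0∞)) ^ ((1 : ℝ) / 2) *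
        ∑' m, ((m + 1 - n : ℕ) : ℝ≥0∞) ^ ((1 : ℝ) / 2) * d m :=
        ENNReal.tsum_le_tsum fun n => mul_le_mul_right (L2_tsum_tsum_ite_le d n) _
    _ = ∑' m, (∑' n : ℕ, (1 / ((n + 1 : ℕ) : ℝ≥0∞)) ^ ((1 : ℝ) / 2) *
        ((m + 1 - n : ℕ) : ℝ≥0∞) ^ ((1 : ℝ) / 2)) * d m := by
        simp_rw [← ENNReal.tsum_mul_left, ← ENNReal.tsum_mul_right, mul_assoc]
        exact ENNReal.tsum_comm
    _ ≤ ∑' m, ENNReal.ofReal (π / 2) * (m + 1 : ℕ) * d m :=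
        ENNReal.tsum_le_tsum fun m => mul_le_mul_left (tsum_rpow_inv_mul_rpow_sub_le m) _
    _ = ENNReal.ofReal (π / 2) * ∑' i, ∑' m, if i ≤ m then d m else 0 := by
        simp_rw [mul_assoc, ENNReal.tsum_mul_left]
        rw [ENNReal.tsum_comm (f := fun i m => if i ≤ m then d m else 0)]
        congr 1
        refine tsum_congr fun m => ?_
        simpa using (tsum_ite_add_le 0 m (d m)).symm

end ENNReal

theorem Antitone.ofReal_eq_tsum_ite_sub {a : ℕ → ℝ} (ha : Antitone a)
    (h0 : Tendsto a atTop (𝓝 0)) (i : ℕ) :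
    ENNReal.ofReal (a i) = ∑' m, if i ≤ m then ENNReal.ofReal (a m - a (m + 1)) else 0 := by
  have hnn : ∀ m, 0 ≤ a m - a (m + 1) := fun m => sub_nonneg.2 (ha m.le_succ)
  have htel : HasSum (fun j => a (j + i) - a (j + i + 1)) (a i) := by
    rw [hasSum_iff_tendsto_nat_of_nonneg fun j => hnn _]
    have hpartial : ∀ N, ∑ j ∈ range N, (a (j + i) - a (j + i + 1)) = a i - a (N + i) := by
      intro N
      simpa [add_right_comm] using sum_range_sub' (fun j => a (j + i)) N
    simp_rw [hpartial]
    simpa using tendsto_const_nhds.sub ((tendsto_add_atTop_iff_nat i).2 h0)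
  have hite : HasSum (fun m => if i ≤ m then a m - a (m + 1) else 0) (a i) := by
    have hshift : HasSum (fun j => (fun m => if i ≤ m then a m - a (m + 1) else 0) (j + i))
        (a i) := by
      simpa only [Nat.le_add_left, if_true] using htel
    have hzero : ∑ j ∈ range i, (if i ≤ j then a j - a (j + 1) else 0) = 0 :=
      sum_eq_zero fun j hj => if_neg (by rw [mem_range] at hj; omega)
    have := HasSum.sum_range_add (f := fun m => if i ≤ m then a m - a (m + 1) else 0) hshift
    rwa [hzero, zero_add] at this
  rw [← hite.tsum_eq, ENNReal.ofReal_tsum_of_nonneg (fun m => by split_ifs <;> simp [hnn])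
    hite.summable]
  exact tsum_congr fun m => by split_ifs <;> simp

/-- Strong discrete Stechkin inequality for `q = 2` with constant `π/2`. -/
theorem stechkin_strong_discrete_q2 (a : ℕ → ℝ) (ha0 : ∀ n, 0 ≤ a n) (ha : Antitone a) :
    ∑' n : ℕ, ((1 / ((n + 1 : ℕ) : ℝ≥0∞)) *
        ∑' k : ℕ, ENNReal.ofReal (a (n + 1 + k)) ^ (2 : ℝ)) ^ ((1 : ℝ) / 2)
      ≤ ENNReal.ofReal (π / 2) * ∑' n : ℕ, ENNReal.ofReal (a (n + 1)) := by
  by_cases hfin : ∑' n : ℕ, ENNReal.ofReal (a (n + 1)) = ∞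
  · rw [hfin, ENNReal.mul_top (by simp [pi_pos])]
    exact le_top
  have hshift : Antitone fun n => a (n + 1) := ha.comp_monotone fun _ _ h => by omega
  have hlim : Tendsto (fun n => a (n + 1)) atTop (𝓝 0) := by
    simpa [ENNReal.toReal_ofReal (ha0 _)] using
      (ENNReal.summable_toReal hfin).tendsto_atTop_zero
  have hlayer : ∀ i, ENNReal.ofReal (a (i + 1)) =
      ∑' m, if i ≤ m then ENNReal.ofReal (a (m + 1) - a (m + 1 + 1)) else 0 :=
    hshift.ofReal_eq_tsum_ite_sub hlim
  simp_rw [add_right_comm _ 1, hlayer]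
  exact ENNReal.stechkin_q2_of_layers _
end

section
/- The constant π/2 is optimal in the strong discrete Stechkin inequality for q = 2: for every c < π/2 there exists a nonincreasing nonnegative sequence (a_n) with ∑_{n=1}^∞ (1/n · ∑_{k=n}^∞ a_k²)^{1/2} > c · ∑_{n=1}^∞ a_n < ∞. -/
open Real Filter Topology
open scoped ENNReal

/-!
Take `a = N⁻¹ · 𝟙_{[0, N]}`. Then `∑ a_{n+1} = 1`, while for `n < N` the `n`-th term on the right
is `N⁻¹ √((N - n)/(n + 1))`. Since `x ↦ √((N - x)/(x + 1))` is decreasing, the right side is at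
least `N⁻¹ ∫₀ᴺ √((N - x)/(x + 1)) dx`, and this integral has the closed form
`(N + 1)/2 · arccos ((1 - N)/(N + 1)) - √N`, so divided by `N` it tends to `π/2`.
-/

noncomputable def stechkinKernel (N x : ℝ) : ℝ := √((N - x) / (x + 1))

lemma hasDerivAt_stechkinKernel_primitive {N x : ℝ} (hx : -1 < x) (hxN : x < N) :
    HasDerivAt (fun x => √((N - x) * (x + 1)) - (N + 1) / 2 * arccos ((2 * x + 1 - N) / (N + 1)))
      (stechkinKernel N x) x := by
  have hx1 : 0 < x + 1 := by linarith
  have hNx : 0 < N - x := by linarith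
  have hN1 : 0 < N + 1 := by linarith
  set u := (2 * x + 1 - N) / (N + 1)
  have hu : 1 - u ^ 2 = (2 / (N + 1)) ^ 2 * ((N - x) * (x + 1)) := by
    simp only [u]; field_simp; ring
  have hu₀ : 0 < 1 - u ^ 2 := by rw [hu]; positivity
  have hu₁ : u ≠ -1 := by rintro h; rw [h] at hu₀; norm_num at hu₀
  have hu₂ : u ≠ 1 := by rintro h; rw [h] at hu₀; norm_num at hu₀
  have hlin : HasDerivAt (fun x => (2 * x + 1 - N) / (N + 1)) (2 / (N + 1)) x := by
    simpa using ((((hasDerivAt_id x).const_mul 2).add_const 1).sub_const N).div_const (N + 1)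
  have hquad : HasDerivAt (fun x => (N - x) * (x + 1)) (N - 1 - 2 * x) x := by
    refine (((hasDerivAt_id x).const_sub N).mul ((hasDerivAt_id x).add_const 1)).congr_deriv ?_
    simp only [id_eq]; ring
  refine (((hasDerivAt_sqrt (by positivity)).comp x hquad).sub
    (((hasDerivAt_arccos hu₁ hu₂).comp x hlin).const_mul ((N + 1) / 2))).congr_deriv ?_
  rw [hu, sqrt_mul (sq_nonneg _), sqrt_sq (by positivity), stechkinKernel,
    sqrt_div hNx.le, sqrt_mul hNx.le]
  field_simp
  rw [sq_sqrt hNx.le]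
  ring

lemma integral_stechkinKernel {N : ℝ} (hN : 0 ≤ N) :
    ∫ x in (0 : ℝ)..N, stechkinKernel N x = (N + 1) / 2 * arccos ((1 - N) / (N + 1)) - √N := by
  have hcont : ContinuousOn (stechkinKernel N) (Set.Icc 0 N) := by
    refine continuous_sqrt.comp_continuousOn (ContinuousOn.div (by fun_prop) (by fun_prop) ?_)
    intro x hx
    linarith [hx.1]
  rw [intervalIntegral.integral_eq_sub_of_hasDeriv_right_of_le hN (by fun_prop)
    (fun x hx => (hasDerivAt_stechkinKernel_primitive (by linarith [hx.1]) hx.2).hasDerivWithinAt)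
    (hcont.intervalIntegrable_of_Icc hN)]
  have h1 : (2 * N + 1 - N) / (N + 1) = 1 := by
    rw [div_eq_one_iff_eq (by linarith)]; ring
  simp only [h1, arccos_one, sub_self, zero_mul, sqrt_zero, mul_zero, zero_add, mul_one,
    sub_zero]
  ring

lemma stechkinKernel_antitoneOn {N : ℝ} (hN : -1 ≤ N) :
    AntitoneOn (stechkinKernel N) (Set.Ioi (-1)) := by
  intro x hx y hy hxy
  apply sqrt_le_sqrt
  rw [div_le_div_iff₀ (by linarith [hy.out]) (by linarith [hx.out])]
  nlinarith

lemma integral_stechkinKernel_le_sum (N : ℕ) :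
    ∫ x in (0 : ℝ)..N, stechkinKernel N x ≤ ∑ i ∈ Finset.range N, stechkinKernel N i := by
  have hanti : AntitoneOn (stechkinKernel N) (Set.Icc 0 (0 + N)) :=
    (stechkinKernel_antitoneOn (by linarith [N.cast_nonneg (α := ℝ)])).mono fun x hx => by
      simp only [Set.mem_Ioi]; linarith [hx.1]
  simpa using hanti.integral_le_sum

lemma tendsto_integral_stechkinKernel_div :
    Tendsto (fun N : ℝ => (∫ x in (0 : ℝ)..N, stechkinKernel N x) / N) atTop (𝓝 (π / 2)) := by
  have hinv := tendsto_inv_atTop_zero (𝕜 := ℝ)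
  have hcoef : Tendsto (fun N : ℝ => (N + 1) / (2 * N)) atTop (𝓝 (1 / 2)) := by
    have := (hinv.const_mul (1 / 2)).const_add (1 / 2)
    rw [mul_zero, add_zero] at this
    refine this.congr' ?_
    filter_upwards [eventually_gt_atTop 0] with N hN
    field_simp
  have harg : Tendsto (fun N : ℝ => (1 - N) / (N + 1)) atTop (𝓝 (-1)) := by
    have := ((hinv.comp (tendsto_atTop_add_const_right _ 1 tendsto_id)).const_mul 2).sub_const 1
    rw [mul_zero, zero_sub] at this
    refine this.congr' ?_
    filter_upwards [eventually_gt_atTop 0] with N hN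
    simp only [Function.comp_apply, id_eq]
    field_simp
    ring
  have hsqrt : Tendsto (fun N : ℝ => √N / N) atTop (𝓝 0) := by
    simp only [sqrt_div_self]
    exact hinv.comp tendsto_sqrt_atTop
  have := (hcoef.mul ((continuous_arccos.tendsto _).comp harg)).sub hsqrt
  rw [arccos_neg_one, show 1 / 2 * π - 0 = π / 2 by ring] at this
  refine this.congr' ?_
  filter_upwards [eventually_gt_atTop 0] with N hN
  rw [integral_stechkinKernel hN.le]
  simp only [Function.comp_apply]
  field_simp

lemma tsum_ite_add_le {M : Type*} [AddCommMonoid M] [TopologicalSpace M] (m N : ℕ) (c : M) :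
    ∑' k : ℕ, (if m + k ≤ N then c else 0) = (N + 1 - m) • c := by
  rw [tsum_eq_sum (s := Finset.range (N + 1 - m))
      fun k hk => if_neg (by rw [Finset.mem_range] at hk; omega),
    Finset.sum_congr rfl fun k hk => if_pos (by rw [Finset.mem_range] at hk; omega),
    Finset.sum_const, Finset.card_range]

noncomputable def stechkinWitness (N n : ℕ) : ℝ := if n ≤ N then (N : ℝ)⁻¹ else 0

lemma stechkinWitness_nonneg (N n : ℕ) : 0 ≤ stechkinWitness N n := by
  unfold stechkinWitness; split_ifs <;> positivity

lemma stechkinWitness_antitone (N : ℕ) : Antitone (stechkinWitness N) := by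
  intro m n hmn
  unfold stechkinWitness
  split_ifs <;> first | positivity | rfl | omega

lemma summable_stechkinWitness (N : ℕ) : Summable (stechkinWitness N) :=
  summable_of_ne_finset_zero (s := Finset.range (N + 1)) fun n hn =>
    if_neg (by rw [Finset.mem_range] at hn; omega)

lemma tsum_stechkinWitness_succ {N : ℕ} (hN : N ≠ 0) : ∑' n : ℕ, stechkinWitness N (n + 1) = 1 := by
  simp only [stechkinWitness, add_comm _ 1, tsum_ite_add_le, nsmul_eq_mul]
  rw [Nat.add_sub_cancel_left]
  field_simp

lemma tsum_stechkinWitness_sq {N n : ℕ} (hn : n < N) :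
    ∑' k : ℕ, ENNReal.ofReal (stechkinWitness N (n + 1 + k)) ^ (2 : ℝ)
      = ENNReal.ofReal ((N - n) / N ^ 2) := by
  have hsq (m : ℕ) : ENNReal.ofReal (stechkinWitness N m) ^ (2 : ℝ)
      = if m ≤ N then ENNReal.ofReal ((N : ℝ)⁻¹ ^ 2) else 0 := by
    unfold stechkinWitness
    split_ifs
    · rw [ENNReal.ofReal_rpow_of_nonneg (by positivity) zero_le_two, rpow_two]
    · simp
  simp only [hsq, tsum_ite_add_le, nsmul_eq_mul]
  rw [← ENNReal.ofReal_natCast, ← ENNReal.ofReal_mul (by positivity)]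
  congr 1
  rw [show N + 1 - (n + 1) = N - n by omega, Nat.cast_sub hn.le]
  ring

/-- The paper's `((1/n) ∑_{k ≥ n} a_k²)^{1/2}` at the index `n + 1`. -/
noncomputable def rootMeanTail (a : ℕ → ℝ) (n : ℕ) : ℝ≥0∞ :=
  ((1 / ((n + 1 : ℕ) : ℝ≥0∞)) * ∑' k : ℕ, ENNReal.ofReal (a (n + 1 + k)) ^ (2 : ℝ)) ^ ((1 : ℝ) / 2)

lemma rootMeanTail_stechkinWitness {N n : ℕ} (hn : n < N) :
    rootMeanTail (stechkinWitness N) n = ENNReal.ofReal (stechkinKernel N n / N) := by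
  have hnN : (n : ℝ) < N := by exact_mod_cast hn
  rw [rootMeanTail, tsum_stechkinWitness_sq hn, one_div, ← ENNReal.ofReal_natCast,
    ← ENNReal.ofReal_inv_of_pos (by positivity), ← ENNReal.ofReal_mul (by positivity),
    ENNReal.ofReal_rpow_of_nonneg (by positivity) (by norm_num), ← sqrt_eq_rpow, stechkinKernel,
    show ((n + 1 : ℕ) : ℝ)⁻¹ * ((N - n) / N ^ 2) = (N - n) / (n + 1) * ((N : ℝ)⁻¹) ^ 2 by
      push_cast; ring,
    sqrt_mul (div_nonneg (by linarith) (by positivity)), sqrt_sq (by positivity), ← div_eq_mul_inv]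

lemma ofReal_sum_stechkinKernel_le_tsum_rootMeanTail (N : ℕ) :
    ENNReal.ofReal (∑ n ∈ Finset.range N, stechkinKernel N n / N) ≤
      ∑' n : ℕ, rootMeanTail (stechkinWitness N) n := by
  rw [ENNReal.ofReal_sum_of_nonneg fun n _ => by unfold stechkinKernel; positivity,
    ← Finset.sum_congr rfl fun n hn => rootMeanTail_stechkinWitness (Finset.mem_range.1 hn)]
  exact ENNReal.sum_le_tsum _

/-- Optimality of the constant `π/2` in the strong discrete Stechkin inequality for `q = 2`. -/
theorem stechkin_strong_discrete_q2_optimal (c : ℝ) (hc : c < π / 2) :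
    ∃ a : ℕ → ℝ, (∀ n, 0 ≤ a n) ∧ Antitone a ∧ Summable a ∧
      ENNReal.ofReal (c * ∑' n : ℕ, a (n + 1)) <
        ∑' n : ℕ, ((1 / ((n + 1 : ℕ) : ℝ≥0∞)) *
          ∑' k : ℕ, ENNReal.ofReal (a (n + 1 + k)) ^ (2 : ℝ)) ^ ((1 : ℝ) / 2) := by
  have hlim := tendsto_integral_stechkinKernel_div.comp tendsto_natCast_atTop_atTop
  obtain ⟨N, hcN, hN⟩ := ((hlim.eventually (eventually_gt_nhds (max_lt hc (by positivity)))).and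
    (eventually_ne_atTop 0)).exists
  have hsum : max c 0 < ∑ n ∈ Finset.range N, stechkinKernel N n / N := by
    rw [← Finset.sum_div]
    exact hcN.trans_le (div_le_div_of_nonneg_right (integral_stechkinKernel_le_sum N) N.cast_nonneg)
  refine ⟨stechkinWitness N, stechkinWitness_nonneg N, stechkinWitness_antitone N,
    summable_stechkinWitness N, ?_⟩
  rw [tsum_stechkinWitness_succ hN, mul_one]
  calc ENNReal.ofReal c < ENNReal.ofReal (∑ n ∈ Finset.range N, stechkinKernel N n / N) :=
        (ENNReal.ofReal_lt_ofReal_iff ((le_max_right c 0).trans_lt hsum)).2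
          ((le_max_left c 0).trans_lt hsum)
    _ ≤ _ := ofReal_sum_stechkinKernel_le_tsum_rootMeanTail N
end

section
/- For each k₀ ∈ ℕ, let S(k₀) = ∑_{n=1}^{k₀} n^{-1/2} · ((k₀ - n + 1)/k₀²)^{1/2}. Then sup_{k₀ ∈ ℕ} S(k₀) = π/2. -/
/-!
Write `m = k + 1`. Pairing the terms `n` and `m - n` turns `2 k S(k)` into `m ∑_{n=1}^{k} w(n)`
with `w(x) = 1 / √(x (m - x))`, whose antiderivative is `arcsin (2x / m - 1)`. As `w` is
convex, the midpoint and trapezoid rules compare the sum with integrals of `w`: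
`2 arcsin (1 - 2 / m) ≤ ∑ w(n) ≤ 2 arcsin (1 - 1 / m)`. The upper bound gives `S(k) ≤ π / 2`
because `arccos (1 - 1 / m) ≥ π / (2m)`, and the lower bound tends to `π`.
-/

open Real Set Finset Filter MeasureTheory intervalIntegral Topology

section Comp

variable {𝕜 E α β : Type*} [Semiring 𝕜] [PartialOrder 𝕜] [AddCommMonoid E]
  [AddCommMonoid α] [PartialOrder α] [AddCommMonoid β] [PartialOrder β] [SMul 𝕜 E] [SMul 𝕜 α] [SMul 𝕜 β]
  {s : Set E} {t : Set β} {f : E → β} {g : β → α}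

theorem ConcaveOn.comp_of_mapsTo (hg : ConcaveOn 𝕜 t g) (hf : ConcaveOn 𝕜 s f)
    (hst : MapsTo f s t) (hg' : MonotoneOn g t) : ConcaveOn 𝕜 s (g ∘ f) :=
  ⟨hf.1, fun _ hx _ hy _ _ ha hb hab =>
    (hg.2 (hst hx) (hst hy) ha hb hab).trans <|
      hg' (hg.1 (hst hx) (hst hy) ha hb hab) (hst <| hf.1 hx hy ha hb hab) <|
        hf.2 hx hy ha hb hab⟩

theorem ConvexOn.comp_concaveOn_of_mapsTo (hg : ConvexOn 𝕜 t g) (hf : ConcaveOn 𝕜 s f)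
    (hst : MapsTo f s t) (hg' : AntitoneOn g t) : ConvexOn 𝕜 s (g ∘ f) :=
  hg.dual.comp_of_mapsTo hf hst hg'

end Comp

section HermiteHadamard

variable {g : ℝ → ℝ} {a b : ℝ}

theorem integral_add_comp_sub_left_eq_two_mul (hg : IntervalIntegrable g volume a b) :
    ∫ x in a..b, (g x + g (a + b - x)) = 2 * ∫ x in a..b, g x := by
  have hrefl : IntervalIntegrable (fun x => g (a + b - x)) volume a b := by
    simpa using (hg.comp_sub_left (a + b)).symm
  rw [integral_add hg hrefl, integral_comp_sub_left (fun x => g x)]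
  simp only [add_sub_cancel_right, add_sub_cancel_left]
  ring

theorem ConvexOn.two_mul_map_midpoint_le_add (hg : ConvexOn ℝ (Icc a b) g) {x : ℝ}
    (hx : x ∈ Icc a b) : 2 * g ((a + b) / 2) ≤ g x + g (a + b - x) := by
  have hx' : a + b - x ∈ Icc a b := ⟨by linarith [hx.2], by linarith [hx.1]⟩
  have h := hg.2 hx hx' (by norm_num : (0 : ℝ) ≤ 1 / 2) (by norm_num : (0 : ℝ) ≤ 1 / 2)
    (by norm_num)
  have hmid : 1 / 2 * x + 1 / 2 * (a + b - x) = (a + b) / 2 := by ring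
  simp only [smul_eq_mul, hmid] at h
  linarith

theorem ConvexOn.add_map_sub_le (hg : ConvexOn ℝ (Icc a b) g) {x : ℝ}
    (hx : x ∈ Icc a b) : g x + g (a + b - x) ≤ g a + g b := by
  rcases (hx.1.trans hx.2).eq_or_lt with rfl | hab
  · obtain rfl : x = a := le_antisymm hx.2 hx.1
    simp
  set t := (b - x) / (b - a)
  have ht₀ : 0 ≤ t := div_nonneg (by linarith [hx.2]) (by linarith)
  have ht₁ : 0 ≤ 1 - t := by
    rw [sub_nonneg, div_le_one (by linarith)]; linarith [hx.1]
  have ht : t * (b - a) = b - x := div_mul_cancel₀ _ (by linarith)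
  have hxt : t * a + (1 - t) * b = x := by linear_combination -ht
  have hxt' : (1 - t) * a + t * b = a + b - x := by linear_combination ht
  have ha : a ∈ Icc a b := left_mem_Icc.2 hab.le
  have hb : b ∈ Icc a b := right_mem_Icc.2 hab.le
  have h₁ := hg.2 ha hb ht₀ ht₁ (by ring)
  have h₂ := hg.2 ha hb ht₁ ht₀ (by ring)
  simp only [smul_eq_mul, hxt, hxt'] at h₁ h₂
  linarith

theorem ConvexOn.mul_map_midpoint_le_integral (hg : ConvexOn ℝ (Icc a b) g) (hab : a ≤ b)
    (hint : IntervalIntegrable g volume a b) :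
    (b - a) * g ((a + b) / 2) ≤ ∫ x in a..b, g x := by
  have h := integral_mono_on hab intervalIntegrable_const
    (hint.add (by simpa using (hint.comp_sub_left (a + b)).symm))
    fun x hx => hg.two_mul_map_midpoint_le_add hx
  rw [integral_add_comp_sub_left_eq_two_mul hint, intervalIntegral.integral_const,
    smul_eq_mul] at h
  linarith

theorem ConvexOn.integral_le_mul_add (hg : ConvexOn ℝ (Icc a b) g) (hab : a ≤ b)
    (hint : IntervalIntegrable g volume a b) :
    ∫ x in a..b, g x ≤ (b - a) * (g a + g b) / 2 := by
  have h := integral_mono_on hab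
    (hint.add (by simpa using (hint.comp_sub_left (a + b)).symm)) intervalIntegrable_const
    fun x hx => hg.add_map_sub_le hx
  rw [integral_add_comp_sub_left_eq_two_mul hint, intervalIntegral.integral_const,
    smul_eq_mul] at h
  linarith

end HermiteHadamard

section UnitSteps

variable {g : ℝ → ℝ} {a : ℝ} {N : ℕ} {i : ℕ}

theorem Icc_add_nat_subset (hi : i < N) : Icc (a + i) (a + i + 1) ⊆ Icc a (a + N) := by
  have : (i : ℝ) + 1 ≤ N := by exact_mod_cast hi
  exact Icc_subset_Icc (by linarith [i.cast_nonneg (α := ℝ)]) (by linarith)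

theorem IntervalIntegrable.mono_add_nat (hint : IntervalIntegrable g volume a (a + N))
    (hi : i < N) : IntervalIntegrable g volume (a + i) (a + i + 1) :=
  hint.mono_set <| by
    rw [Set.uIcc_of_le (by simp), Set.uIcc_of_le (by linarith)]
    exact Icc_add_nat_subset hi

theorem integral_eq_sum_integral_add_nat (hint : IntervalIntegrable g volume a (a + N)) :
    ∫ x in a..(a + N), g x = ∑ i ∈ range N, ∫ x in (a + i)..(a + i + 1), g x := by
  have hint' : ∀ i < N, IntervalIntegrable g volume (a + i) (a + (i + 1 : ℕ)) := fun i hi => by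
    simpa [add_assoc] using hint.mono_add_nat hi
  simpa [add_assoc] using (sum_integral_adjacent_intervals hint').symm

theorem ConvexOn.sum_midpoint_le_integral (hg : ConvexOn ℝ (Icc a (a + N)) g)
    (hint : IntervalIntegrable g volume a (a + N)) :
    ∑ i ∈ range N, g (a + i + 1 / 2) ≤ ∫ x in a..(a + N), g x := by
  rw [integral_eq_sum_integral_add_nat hint]
  refine sum_le_sum fun i hi => ?_
  have hi := mem_range.1 hi
  have h := (hg.subset (Icc_add_nat_subset hi) (convex_Icc _ _)).mul_map_midpoint_le_integral
    (by linarith) (hint.mono_add_nat hi)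
  rwa [add_sub_cancel_left, one_mul, show (a + i + (a + i + 1)) / 2 = a + i + 1 / 2 by ring]
    at h

theorem ConvexOn.integral_le_sum_trapezoid (hg : ConvexOn ℝ (Icc a (a + N)) g)
    (hint : IntervalIntegrable g volume a (a + N)) :
    ∫ x in a..(a + N), g x ≤ ∑ i ∈ range N, (g (a + i) + g (a + i + 1)) / 2 := by
  rw [integral_eq_sum_integral_add_nat hint]
  refine sum_le_sum fun i hi => ?_
  have hi := mem_range.1 hi
  have h := (hg.subset (Icc_add_nat_subset hi) (convex_Icc _ _)).integral_le_mul_add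
    (by linarith) (hint.mono_add_nat hi)
  rwa [add_sub_cancel_left, one_mul] at h

end UnitSteps

theorem sum_range_add_succ_div_two_le {u : ℕ → ℝ} (hu : ∀ i, 0 ≤ u i) (N : ℕ) :
    ∑ i ∈ range N, (u i + u (i + 1)) / 2 ≤ ∑ i ∈ range (N + 1), u i := by
  rw [← sum_div, sum_add_distrib]
  linarith [sum_range_succ u N, sum_range_succ' u N, hu 0, hu N]

namespace Stechkin

/-- `π` times the density of the arcsine law on `[0, m]`. -/
noncomputable def arcsineWeight (m x : ℝ) : ℝ := (√(x * (m - x)))⁻¹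

variable {m : ℝ}

theorem concaveOn_mul_sub (m : ℝ) : ConcaveOn ℝ univ fun x : ℝ => x * (m - x) :=
  ⟨convex_univ, fun x _ y _ a b ha hb hab => by
    simp only [smul_eq_mul]
    obtain rfl : b = 1 - a := by linarith
    nlinarith [mul_nonneg (mul_nonneg ha hb) (sq_nonneg (x - y))]⟩

theorem convexOn_arcsineWeight (m : ℝ) : ConvexOn ℝ (Ioo 0 m) (arcsineWeight m) := by
  have hpos : ∀ x ∈ Ioo 0 m, 0 < x * (m - x) := fun x hx => mul_pos hx.1 (sub_pos.2 hx.2)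
  have hsqrt : ConcaveOn ℝ (Ioo 0 m) fun x => √(x * (m - x)) :=
    strictConcaveOn_sqrt.concaveOn.comp_of_mapsTo
      ((concaveOn_mul_sub m).subset (subset_univ _) (convex_Ioo 0 m))
      (fun x hx => (hpos x hx).le) fun _ _ _ _ h => sqrt_le_sqrt h
  have hinv : ConvexOn ℝ (Ioi 0) fun y : ℝ => y⁻¹ := by
    simpa only [zpow_neg_one] using convexOn_zpow (𝕜 := ℝ) (-1)
  exact hinv.comp_concaveOn_of_mapsTo hsqrt (fun x hx => sqrt_pos.2 (hpos x hx))
    antitoneOn_inv_pos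

theorem intervalIntegrable_arcsineWeight {a b : ℝ} (ha : a ∈ Ioo 0 m) (hb : b ∈ Ioo 0 m) :
    IntervalIntegrable (arcsineWeight m) volume a b :=
  (((convexOn_arcsineWeight m).continuousOn isOpen_Ioo).mono
    (ordConnected_Ioo.uIcc_subset ha hb)).intervalIntegrable

theorem hasDerivAt_arcsin_two_mul_div_sub_one {x : ℝ} (hx : x ∈ Ioo 0 m) :
    HasDerivAt (fun y => arcsin (2 * y / m - 1)) (arcsineWeight m x) x := by
  have hm : 0 < m := hx.1.trans hx.2
  have hlo : 2 * x / m - 1 ≠ -1 := by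
    rw [Ne, sub_eq_neg_self]; exact (div_pos (by linarith [hx.1]) hm).ne'
  have hhi : 2 * x / m - 1 ≠ 1 := by
    rw [Ne, sub_eq_iff_eq_add, div_eq_iff hm.ne']; linarith [hx.2]
  have h := (hasDerivAt_arcsin hlo hhi).comp x
    ((((hasDerivAt_id x).const_mul 2).div_const m).sub_const 1)
  suffices e : 1 / √(1 - (2 * x / m - 1) ^ 2) * (2 * 1 / m) = arcsineWeight m x by
    rw [← e]; exact h
  have hsq : 1 - (2 * x / m - 1) ^ 2 = (2 / m) ^ 2 * (x * (m - x)) := by field_simp; ring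
  rw [hsq, sqrt_mul (by positivity), sqrt_sq (by positivity), arcsineWeight]
  field_simp

theorem integral_arcsineWeight {a b : ℝ} (ha : a ∈ Ioo 0 m) (hb : b ∈ Ioo 0 m) :
    ∫ x in a..b, arcsineWeight m x = arcsin (2 * b / m - 1) - arcsin (2 * a / m - 1) :=
  integral_eq_sub_of_hasDerivAt
    (fun _ hx => hasDerivAt_arcsin_two_mul_div_sub_one (ordConnected_Ioo.uIcc_subset ha hb hx))
    (intervalIntegrable_arcsineWeight ha hb)

theorem integral_arcsineWeight_sub {c : ℝ} (hc : 0 < c) (hcm : c < m) :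
    ∫ x in c..(m - c), arcsineWeight m x = 2 * arcsin (1 - 2 * c / m) := by
  have hm : 0 < m := hc.trans hcm
  rw [integral_arcsineWeight ⟨hc, hcm⟩ ⟨by linarith, by linarith⟩,
    show 2 * (m - c) / m - 1 = 1 - 2 * c / m by field_simp; ring,
    show 2 * c / m - 1 = -(1 - 2 * c / m) by ring, arcsin_neg]
  ring

theorem arcsineWeight_nonneg (m x : ℝ) : 0 ≤ arcsineWeight m x := inv_nonneg.2 (sqrt_nonneg _)

theorem sum_arcsineWeight_le (k : ℕ) :
    ∑ i ∈ range k, arcsineWeight (k + 1) (1 + i) ≤ 2 * arcsin (1 - 1 / (k + 1)) := by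
  set m : ℝ := k + 1 with hm
  have hsub : Set.Icc (1 / 2 : ℝ) (1 / 2 + k) ⊆ Ioo 0 m :=
    Icc_subset_Ioo (by norm_num) (by linarith)
  have hint := intervalIntegrable_arcsineWeight (hsub (left_mem_Icc.2 (by simp)))
    (hsub (right_mem_Icc.2 (by simp)))
  calc ∑ i ∈ range k, arcsineWeight m (1 + i)
      = ∑ i ∈ range k, arcsineWeight m (1 / 2 + i + 1 / 2) :=
        sum_congr rfl fun i _ => by ring_nf
    _ ≤ ∫ x in (1 / 2)..(1 / 2 + k), arcsineWeight m x :=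
        ((convexOn_arcsineWeight m).subset hsub (convex_Icc _ _)).sum_midpoint_le_integral hint
    _ = 2 * arcsin (1 - 1 / m) := by
        rw [show (1 / 2 : ℝ) + k = m - 1 / 2 by rw [hm]; ring,
          integral_arcsineWeight_sub (by norm_num) (by linarith [k.cast_nonneg (α := ℝ)])]
        ring_nf

theorem le_sum_arcsineWeight {k : ℕ} (hk : 0 < k) :
    2 * arcsin (1 - 2 / (k + 1)) ≤ ∑ i ∈ range k, arcsineWeight (k + 1) (1 + i) := by
  obtain ⟨N, rfl⟩ : ∃ N, k = N + 1 := ⟨k - 1, by omega⟩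
  set m : ℝ := (N + 1 : ℕ) + 1 with hm
  have hmN : 1 + N < m - 1 / 2 := by rw [hm]; push_cast; linarith
  have hsub : Set.Icc (1 : ℝ) (1 + N) ⊆ Ioo 0 m := Icc_subset_Ioo one_pos (by linarith)
  have hint := intervalIntegrable_arcsineWeight (hsub (left_mem_Icc.2 (by simp)))
    (hsub (right_mem_Icc.2 (by simp)))
  calc 2 * arcsin (1 - 2 / m)
      = ∫ x in (1 : ℝ)..(1 + N), arcsineWeight m x := by
        rw [show (1 : ℝ) + N = m - 1 by rw [hm]; push_cast; ring,
          integral_arcsineWeight_sub one_pos (by linarith [N.cast_nonneg (α := ℝ)])]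
        ring_nf
    _ ≤ ∑ i ∈ range N, (arcsineWeight m (1 + i) + arcsineWeight m (1 + i + 1)) / 2 :=
        ((convexOn_arcsineWeight m).subset hsub (convex_Icc _ _)).integral_le_sum_trapezoid
          hint
    _ ≤ ∑ i ∈ range (N + 1), arcsineWeight m (1 + i) := by
        simpa only [Nat.cast_succ, add_assoc] using
          sum_range_add_succ_div_two_le (u := fun i : ℕ => arcsineWeight m (1 + i))
            (fun _ => arcsineWeight_nonneg _ _) N

noncomputable def stechkinTerm (k x : ℝ) : ℝ := 1 / √x * √((k - x + 1) / k ^ 2)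

noncomputable def stechkinSum (k : ℕ) : ℝ := ∑ n ∈ Finset.Icc 1 k, stechkinTerm k n

theorem stechkinTerm_add_stechkinTerm_sub {k x : ℝ} (hk : 0 < k) (hx : x ∈ Ioo 0 (k + 1)) :
    stechkinTerm k x + stechkinTerm k (k + 1 - x) = (k + 1) / k * arcsineWeight (k + 1) x := by
  have hx' : 0 < k + 1 - x := sub_pos.2 hx.2
  rw [stechkinTerm, stechkinTerm, arcsineWeight, show k - (k + 1 - x) + 1 = x by ring,
    show k - x + 1 = k + 1 - x by ring, sqrt_div hx'.le, sqrt_div hx.1.le, sqrt_sq hk.le,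
    sqrt_mul hx.1.le]
  field_simp
  rw [sq_sqrt hx.1.le, sq_sqrt hx'.le]
  ring

theorem two_mul_mul_stechkinSum (k : ℕ) :
    2 * k * stechkinSum k = (k + 1) * ∑ i ∈ range k, arcsineWeight (k + 1) (1 + i) := by
  have hrange : stechkinSum k = ∑ i ∈ range k, stechkinTerm k (1 + i) := by
    rw [stechkinSum, ← Finset.Ico_add_one_right_eq_Icc, sum_Ico_eq_sum_range]
    simp
  rw [hrange, mul_comm 2, mul_assoc, two_mul]
  nth_rewrite 2 [← sum_range_reflect]
  rw [← sum_add_distrib, mul_sum, mul_sum]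
  refine sum_congr rfl fun i hi => ?_
  have hi := mem_range.1 hi
  have hk : (0 : ℝ) < k := by exact_mod_cast hi.trans_le' (Nat.zero_le i)
  have hik : (i : ℝ) + 1 ≤ k := by exact_mod_cast hi
  have hcast : (1 : ℝ) + ((k - 1 - i : ℕ) : ℝ) = k + 1 - (1 + i) := by
    rw [Nat.cast_sub (by omega), Nat.cast_sub (by omega)]
    push_cast; ring
  rw [hcast, stechkinTerm_add_stechkinTerm_sub hk ⟨by positivity, by linarith⟩]
  field_simp

theorem mul_arcsin_one_sub_inv_le {m : ℝ} (hm : 2 ≤ m) :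
    m * arcsin (1 - 1 / m) ≤ (m - 1) * (π / 2) := by
  set θ := arccos (1 - 1 / m)
  have hθ : 0 ≤ θ := arccos_nonneg _
  have hinv : 1 / m ≤ 1 / 2 := one_div_le_one_div_of_le two_pos hm
  have hcos : cos θ = 1 - 1 / m :=
    cos_arccos (by linarith) (by linarith [one_div_pos.2 (by linarith : 0 < m)])
  -- `1 - θ²/2 ≤ cos θ` gives `θ² ≥ 2/m`, hence `mθ ≥ √(2m) ≥ 2 ≥ π/2`.
  have hθsq : 2 ≤ m * θ ^ 2 := by
    have := one_sub_sq_div_two_le_cos (x := θ)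
    rw [hcos] at this
    have h1 : 1 / m * m = 1 := one_div_mul_cancel (by linarith)
    nlinarith
  have hmθ : 2 ≤ m * θ := by nlinarith
  rw [arcsin_eq_pi_div_two_sub_arccos]
  nlinarith [pi_le_four]

theorem stechkinSum_le {k : ℕ} (hk : 0 < k) : stechkinSum k ≤ π / 2 := by
  have hk' : (1 : ℝ) ≤ k := by exact_mod_cast hk
  have harcsin := mul_arcsin_one_sub_inv_le (m := k + 1) (by linarith)
  refine le_of_mul_le_mul_left ?_ (by positivity : (0 : ℝ) < 2 * k)
  calc 2 * k * stechkinSum k = (k + 1) * ∑ i ∈ range k, arcsineWeight (k + 1) (1 + i) :=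
        two_mul_mul_stechkinSum k
    _ ≤ (k + 1) * (2 * arcsin (1 - 1 / (k + 1))) := by gcongr; exact sum_arcsineWeight_le k
    _ ≤ 2 * k * (π / 2) := by nlinarith

theorem arcsin_one_sub_two_div_le_stechkinSum {k : ℕ} (hk : 0 < k) :
    arcsin (1 - 2 / (k + 1)) ≤ stechkinSum k := by
  have hT := le_sum_arcsineWeight hk
  have hT₀ : 0 ≤ ∑ i ∈ range k, arcsineWeight (k + 1) (1 + i) :=
    sum_nonneg fun i _ => arcsineWeight_nonneg _ _
  refine le_of_mul_le_mul_left ?_ (by positivity : (0 : ℝ) < 2 * k)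
  rw [two_mul_mul_stechkinSum]
  nlinarith

theorem tendsto_arcsin_one_sub_two_div :
    Tendsto (fun k : ℕ => arcsin (1 - 2 / ((k : ℝ) + 1))) atTop (𝓝 (π / 2)) := by
  have h : Tendsto (fun k : ℕ => 1 - 2 / ((k : ℝ) + 1)) atTop (𝓝 1) := by
    simpa [div_eq_mul_inv] using
      ((tendsto_one_div_add_atTop_nhds_zero_nat (𝕜 := ℝ)).const_mul 2).const_sub 1
  rw [← arcsin_one]
  exact (continuous_arcsin.tendsto 1).comp h

end Stechkin

open Stechkin

/-- `sup_{k₀ ∈ ℕ} ∑_{n=1}^{k₀} n^{-1/2} ((k₀ - n + 1)/k₀²)^{1/2} = π/2`. -/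
theorem stechkin_vertex_sup :
    (⨆ k : ℕ+, ∑ n ∈ Finset.Icc 1 (k : ℕ),
        (1 / Real.sqrt n) * Real.sqrt (((k : ℝ) - n + 1) / (k : ℝ) ^ 2)) = π / 2 := by
  refine ciSup_eq_of_forall_le_of_forall_lt_exists_gt (fun k => stechkinSum_le k.pos)
    fun c hc => ?_
  obtain ⟨k, hck, hk⟩ :=
    ((tendsto_arcsin_one_sub_two_div.eventually (lt_mem_nhds hc)).and
      (eventually_gt_atTop 0)).exists
  exact ⟨⟨k, hk⟩, hck.trans_le (arcsin_one_sub_two_div_le_stechkinSum hk)⟩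
end

section
/- For a > 1, the function x ↦ ((x+1)·(π/2) − x^{1/2} − (x+1)·arctan(x^{−1/2})) / x is monotonically increasing on [1, ∞), with derivative (x^{1/2} − arctan(x^{1/2}))/x². -/
open Real Set Topology

/-!
For `x > 0` we have `arctan (1/√x) = π/2 - arctan √x`, so the function equals `N x / x` with
`N x = (x + 1) arctan √x - √x`. The two `1/(2√x)` terms in `N'` cancel, leaving `N' = arctan √x`,
hence `(N x / x)' = (x N' - N) / x² = (√x - arctan √x) / x²`, which is nonnegative because
`arctan t ≤ t` for `t ≥ 0`.
-/

namespace Real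

lemma arctan_le_self {t : ℝ} (ht : 0 ≤ t) : arctan t ≤ t := by
  simpa only [tan_arctan] using le_tan (arctan_nonneg.mpr ht) (arctan_lt_pi_div_two t)

lemma arctan_one_div_sqrt {x : ℝ} (hx : 0 < x) : arctan (1 / √x) = π / 2 - arctan √x := by
  rw [one_div, arctan_inv_of_pos (sqrt_pos.mpr hx)]

lemma hasDerivAt_add_one_mul_arctan_sqrt_sub_sqrt {x : ℝ} (hx : 0 < x) :
    HasDerivAt (fun y : ℝ => (y + 1) * arctan √y - √y) (arctan √x) x := by
  have hsqrt : HasDerivAt Real.sqrt (1 / (2 * √x)) x := hasDerivAt_sqrt hx.ne'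
  have h := (((hasDerivAt_id x).add_const 1).mul hsqrt.arctan).sub hsqrt
  refine h.congr_deriv ?_
  simp only [id, sq_sqrt hx.le]
  field_simp
  ring

end Real

lemma hasDerivAt_pi_div_two_arctan_quotient {x : ℝ} (hx : 0 < x) :
    HasDerivAt (fun x : ℝ =>
        ((x + 1) * (π / 2) - √x - (x + 1) * arctan (1 / √x)) / x)
      ((√x - arctan √x) / x ^ 2) x := by
  have heq : (fun y : ℝ => ((y + 1) * arctan √y - √y) / y) =ᶠ[𝓝 x]
      fun y : ℝ => ((y + 1) * (π / 2) - √y - (y + 1) * arctan (1 / √y)) / y := by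
    filter_upwards [Ioi_mem_nhds hx] with y hy
    rw [arctan_one_div_sqrt hy]
    ring
  refine (((hasDerivAt_add_one_mul_arctan_sqrt_sub_sqrt hx).div (hasDerivAt_id x)
    hx.ne').congr_of_eventuallyEq heq.symm).congr_deriv ?_
  simp only [id, mul_one]
  ring

lemma monotoneOn_pi_div_two_arctan_quotient :
    MonotoneOn (fun x : ℝ =>
        ((x + 1) * (π / 2) - √x - (x + 1) * arctan (1 / √x)) / x) (Ioi 0) := by
  refine monotoneOn_of_hasDerivWithinAt_nonneg (f' := fun x => (√x - arctan √x) / x ^ 2)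
    (convex_Ioi 0) (fun x hx => ?_) (fun x hx => ?_) (fun x _ => ?_)
  · exact (hasDerivAt_pi_div_two_arctan_quotient hx).continuousAt.continuousWithinAt
  · rw [interior_Ioi] at hx
    exact (hasDerivAt_pi_div_two_arctan_quotient hx).hasDerivWithinAt
  · exact div_nonneg (sub_nonneg.mpr (arctan_le_self (sqrt_nonneg x))) (sq_nonneg x)

/-- The function `x ↦ ((x+1)(π/2) − √x − (x+1) arctan(x^{-1/2}))/x` is monotonically
increasing on `[1, ∞)`, with derivative `(√x − arctan √x)/x²`. -/
theorem f_monotone_with_derivative :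
    MonotoneOn (fun x : ℝ =>
        ((x + 1) * (π / 2) - Real.sqrt x - (x + 1) * Real.arctan (1 / Real.sqrt x)) / x)
      (Set.Ici (1 : ℝ)) ∧
    ∀ x : ℝ, 1 ≤ x →
      HasDerivAt (fun x : ℝ =>
          ((x + 1) * (π / 2) - Real.sqrt x - (x + 1) * Real.arctan (1 / Real.sqrt x)) / x)
        ((Real.sqrt x - Real.arctan (Real.sqrt x)) / x ^ 2) x :=
  ⟨monotoneOn_pi_div_two_arctan_quotient.mono (Ici_subset_Ioi.mpr zero_lt_one),
    fun _ hx => hasDerivAt_pi_div_two_arctan_quotient (zero_lt_one.trans_le hx)⟩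
end

section
/- For 0 < p ≤ 1, the sequence A′_n = ((n+1)^p − (n−1)^p) / n^{p−1} (n ∈ ℕ, n ≥ 1) is monotonically decreasing; in particular ((n+1)^p − (n−1)^p)/n^{p−1} ≤ 2^p for all n ≥ 1. -/
/-!
Substituting `t = 1/n` turns the `n`-th term into `g t / t` with `g t = (1 + t)^p - (1 - t)^p`.
For `0 ≤ p ≤ 1` the function `g` is convex on `[0, 1]`, since
`g'' t = p (p - 1) ((1 + t)^(p-2) - (1 - t)^(p-2)) ≥ 0`, and `g 0 = 0`, so `g t / t` is the
slope of a secant of a convex function through the origin and hence increases with `t`.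
The bound is the first term, `A'_1 = 2^p`.
-/

open Real Set

lemma hasDerivAt_one_add_rpow {q x : ℝ} (hx : -1 < x) :
    HasDerivAt (fun t : ℝ => (1 + t) ^ q) (q * (1 + x) ^ (q - 1)) x := by
  simpa using ((hasDerivAt_id x).const_add 1).rpow_const (p := q)
    (Or.inl (by simp only [id]; linarith))

lemma hasDerivAt_one_sub_rpow {q x : ℝ} (hx : x < 1) :
    HasDerivAt (fun t : ℝ => (1 - t) ^ q) (-(q * (1 - x) ^ (q - 1))) x := by
  simpa using ((hasDerivAt_id x).const_sub 1).rpow_const (p := q)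
    (Or.inl (by simp only [id]; linarith))

theorem convexOn_one_add_rpow_sub_one_sub_rpow {p : ℝ} (hp0 : 0 ≤ p) (hp1 : p ≤ 1) :
    ConvexOn ℝ (Icc 0 1) (fun t : ℝ => (1 + t) ^ p - (1 - t) ^ p) := by
  refine convexOn_of_hasDerivWithinAt2_nonneg (convex_Icc 0 1)
    (f' := fun t => p * ((1 + t) ^ (p - 1) + (1 - t) ^ (p - 1)))
    (f'' := fun t => p * ((p - 1) * ((1 + t) ^ (p - 2) - (1 - t) ^ (p - 2)))) ?_ ?_ ?_ ?_
  · exact ((continuous_const.add continuous_id).rpow_const fun _ => Or.inr hp0).sub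
      ((continuous_const.sub continuous_id).rpow_const fun _ => Or.inr hp0) |>.continuousOn
  all_goals
    intro x hx
    rw [interior_Icc] at hx
    obtain ⟨hx0, hx1⟩ := hx
  · refine (((hasDerivAt_one_add_rpow (q := p) (by linarith)).sub
      (hasDerivAt_one_sub_rpow (q := p) hx1)).congr_deriv ?_).hasDerivWithinAt
    ring
  · refine ((((hasDerivAt_one_add_rpow (q := p - 1) (by linarith)).add
      (hasDerivAt_one_sub_rpow (q := p - 1) hx1)).const_mul p).congr_deriv ?_).hasDerivWithinAt
    ring_nf
  · -- `t ↦ t ^ (p - 2)` is antitone and `1 - x ≤ 1 + x`, while `p (p - 1) ≤ 0`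
    have hpow : (1 + x) ^ (p - 2) ≤ (1 - x) ^ (p - 2) :=
      rpow_le_rpow_of_nonpos (by linarith) (by linarith) (by linarith)
    exact mul_nonneg hp0 (mul_nonneg_of_nonpos_of_nonpos (by linarith) (by linarith))

theorem one_add_rpow_sub_one_sub_rpow_div_le {p s t : ℝ} (hp0 : 0 ≤ p) (hp1 : p ≤ 1)
    (hs : 0 < s) (hst : s ≤ t) (ht : t ≤ 1) :
    ((1 + s) ^ p - (1 - s) ^ p) / s ≤ ((1 + t) ^ p - (1 - t) ^ p) / t := by
  simpa using (convexOn_one_add_rpow_sub_one_sub_rpow hp0 hp1).secant_mono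
    (a := 0) (by simp) ⟨hs.le, hst.trans ht⟩ ⟨(hs.trans_le hst).le, ht⟩ hs.ne'
    (hs.trans_le hst).ne' hst

theorem add_one_rpow_sub_sub_one_rpow_div_rpow_sub_one (p : ℝ) {m : ℝ} (hm : 1 ≤ m) :
    ((m + 1) ^ p - (m - 1) ^ p) / m ^ (p - 1) = ((1 + m⁻¹) ^ p - (1 - m⁻¹) ^ p) / m⁻¹ := by
  have hm0 : 0 < m := one_pos.trans_le hm
  rw [show 1 + m⁻¹ = (m + 1) / m by field_simp, show 1 - m⁻¹ = (m - 1) / m by field_simp,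
    div_rpow (by linarith) hm0.le, div_rpow (by linarith) hm0.le, rpow_sub_one hm0.ne']
  field_simp

theorem antitoneOn_add_one_rpow_sub_sub_one_rpow_div_rpow_sub_one {p : ℝ} (hp0 : 0 ≤ p)
    (hp1 : p ≤ 1) :
    AntitoneOn (fun m : ℝ => ((m + 1) ^ p - (m - 1) ^ p) / m ^ (p - 1)) (Ici 1) := by
  intro a ha b hb hab
  dsimp only
  rw [add_one_rpow_sub_sub_one_rpow_div_rpow_sub_one p ha,
    add_one_rpow_sub_sub_one_rpow_div_rpow_sub_one p hb]
  exact one_add_rpow_sub_one_sub_rpow_div_le hp0 hp1 (inv_pos.2 (one_pos.trans_le hb))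
    (inv_anti₀ (one_pos.trans_le ha) hab) (inv_le_one_of_one_le₀ ha)

/-- For `0 < p ≤ 1`, the sequence `A'_n = ((n+1)^p − (n−1)^p)/n^{p−1}` (here indexed so that
`n ∈ ℕ` represents the positive integer `n + 1`) is monotonically decreasing; in particular
all terms are at most `2^p`. -/
theorem Aprime_antitone (p : ℝ) (hp0 : 0 < p) (hp1 : p ≤ 1) :
    Antitone (fun n : ℕ => (((n : ℝ) + 2) ^ p - (n : ℝ) ^ p) / ((n : ℝ) + 1) ^ (p - 1)) ∧
    ∀ n : ℕ, (((n : ℝ) + 2) ^ p - (n : ℝ) ^ p) / ((n : ℝ) + 1) ^ (p - 1) ≤ 2 ^ p := by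
  set A : ℝ → ℝ := fun m => ((m + 1) ^ p - (m - 1) ^ p) / m ^ (p - 1)
  have hA : ∀ n : ℕ,
      (((n : ℝ) + 2) ^ p - (n : ℝ) ^ p) / ((n : ℝ) + 1) ^ (p - 1) = A (n + 1) := by
    intro n
    simp only [A, add_sub_cancel_right, add_assoc, one_add_one_eq_two]
  have hanti : Antitone fun n : ℕ => A (n + 1) := fun a b hab =>
    antitoneOn_add_one_rpow_sub_sub_one_rpow_div_rpow_sub_one hp0.le hp1
      (by simp) (by simp) (by gcongr)
  simp only [hA]
  refine ⟨hanti, fun n => (hanti n.zero_le).trans_eq ?_⟩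
  norm_num [A, zero_rpow hp0.ne']
end

section
/- For all p ∈ (0,1]: 2^p ≥ (3^p − 1)/2^{p−1}, i.e. 2^{2p−1} ≥ 3^p − 1, with equality iff p = 1. -/
/-!
Since `2 ^ (2p - 1) = 4 ^ p / 2`, factor `3 ^ p = 4 ^ p (3/4) ^ p`. For `0 < p < 1`, strict
Bernoulli gives `(3/4) ^ p < 1 - p/4`, so it suffices that `4 ^ p (1/2 - p/4) ≤ 1`, i.e.
`2 - p ≤ 4 ^ (1 - p)`; this is `1 + t ≤ e ^ t ≤ 4 ^ t` at `t = 1 - p`.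
-/

open Real

lemma add_one_le_rpow_of_exp_one_le {a t : ℝ} (ha : exp 1 ≤ a) (ht : 0 ≤ t) :
    t + 1 ≤ a ^ t := by
  have hlog : 1 ≤ log a := by
    rwa [le_log_iff_exp_le (exp_pos 1 |>.trans_le ha)]
  calc t + 1 ≤ log a * t + 1 := by nlinarith
    _ ≤ exp (log a * t) := add_one_le_exp _
    _ = a ^ t := (rpow_def_of_pos (exp_pos 1 |>.trans_le ha) t).symm

lemma four_rpow_mul_two_sub_le {p : ℝ} (hp : p ≤ 1) : (4 : ℝ) ^ p * (2 - p) ≤ 4 := by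
  have hsub : 2 - p ≤ (4 : ℝ) ^ (1 - p) := by
    have he : exp 1 ≤ 4 := exp_one_lt_three.le.trans (by norm_num)
    have := add_one_le_rpow_of_exp_one_le he (sub_nonneg.2 hp)
    linarith
  calc (4 : ℝ) ^ p * (2 - p) ≤ 4 ^ p * 4 ^ (1 - p) := by gcongr
    _ = 4 := by rw [← rpow_add (by norm_num), add_sub_cancel, rpow_one]

lemma three_rpow_lt_four_rpow_mul {p : ℝ} (hp0 : 0 < p) (hp1 : p < 1) :
    (3 : ℝ) ^ p < 4 ^ p * (1 - p / 4) := by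
  have hbern := rpow_one_add_lt_one_add_mul_self (s := -(1 / 4)) (by norm_num) (by norm_num) hp0 hp1
  calc (3 : ℝ) ^ p = 4 ^ p * (1 + -(1 / 4)) ^ p := by
        rw [← mul_rpow (by norm_num) (by norm_num)]; norm_num
    _ < 4 ^ p * (1 - p / 4) := by
        gcongr
        linarith

lemma two_rpow_two_mul_sub_one (p : ℝ) : (2 : ℝ) ^ (2 * p - 1) = 4 ^ p / 2 := by
  rw [rpow_sub two_pos, rpow_one, rpow_mul zero_le_two]
  norm_num

lemma three_rpow_sub_one_lt_two_rpow {p : ℝ} (hp0 : 0 < p) (hp1 : p < 1) :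
    (3 : ℝ) ^ p - 1 < 2 ^ (2 * p - 1) := by
  rw [two_rpow_two_mul_sub_one]
  nlinarith [three_rpow_lt_four_rpow_mul hp0 hp1, four_rpow_mul_two_sub_le hp1.le]

/-- For `p ∈ (0,1]`: `2^{2p−1} ≥ 3^p − 1`, with equality iff `p = 1`. -/
theorem two_pow_ge_three_pow_sub_one (p : ℝ) (hp0 : 0 < p) (hp1 : p ≤ 1) :
    (3 : ℝ) ^ p - 1 ≤ (2 : ℝ) ^ (2 * p - 1) ∧
    ((2 : ℝ) ^ (2 * p - 1) = (3 : ℝ) ^ p - 1 ↔ p = 1) := by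
  rcases hp1.lt_or_eq with hlt | rfl
  · have hstrict := three_rpow_sub_one_lt_two_rpow hp0 hlt
    exact ⟨hstrict.le, iff_of_false hstrict.ne' hlt.ne⟩
  · norm_num
end

section
/- Let 1 < q < ∞. For every nonincreasing nonnegative sequence (a_n), sup_{n∈ℕ} n·(1/n · ∑_{k=n}^∞ a_k^q)^{1/q} ≤ ζ(q)^{1/q} · sup_{n∈ℕ} n·a_n, and the constant ζ(q)^{1/q} is optimal (attained by a_n = 1/n). -/
/-!
If `M = sup n a_n`, then `a_k ≤ M / k`, so `∑_{k ≥ m} a_k^q ≤ M^q ∑_{k ≥ m} k^{-q}`. Grouping the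
indices `k ≥ m` into blocks of length `m` and bounding each term of the `t`-th block by
`(m (t + 1))^{-q}` gives `∑_{k ≥ m} k^{-q} ≤ m^{1-q} ζ(q)`, which is exactly the claimed bound.
For `a_n = 1/n` both sides equal `ζ(q)^{1/q}`, the left one being attained at `n = 1`.
-/

open Real
open scoped ENNReal

namespace ENNReal

/-- Writing `k = t m + r` with `r < m` gives `m + k ≥ m (t + 1)`, and each `t` occurs for `m`
values of `k`. -/
theorem tsum_natCast_add_rpow_neg_le {q : ℝ} (hq : 0 ≤ q) {m : ℕ} (hm : m ≠ 0) :
    ∑' k : ℕ, ((m + k : ℕ) : ℝ≥0∞) ^ (-q) ≤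
      (m : ℝ≥0∞) ^ (1 - q) * ∑' j : ℕ, ((j + 1 : ℕ) : ℝ≥0∞) ^ (-q) := by
  have : NeZero m := ⟨hm⟩
  have hm0 : (m : ℝ≥0∞) ≠ 0 := by exact_mod_cast hm
  have hle (p : ℕ × Fin m) : ((m + (Nat.divModEquiv m).symm p : ℕ) : ℝ≥0∞) ^ (-q) ≤
      ((m * (p.1 + 1) : ℕ) : ℝ≥0∞) ^ (-q) := by
    rw [rpow_neg, rpow_neg, ENNReal.inv_le_inv]
    refine rpow_le_rpow (Nat.cast_le.2 ?_) hq
    rw [Nat.divModEquiv_symm_apply]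
    nlinarith
  calc ∑' k : ℕ, ((m + k : ℕ) : ℝ≥0∞) ^ (-q)
      = ∑' p : ℕ × Fin m, ((m + (Nat.divModEquiv m).symm p : ℕ) : ℝ≥0∞) ^ (-q) :=
        ((Nat.divModEquiv m).symm.tsum_eq fun k => ((m + k : ℕ) : ℝ≥0∞) ^ (-q)).symm
    _ ≤ ∑' p : ℕ × Fin m, ((m * (p.1 + 1) : ℕ) : ℝ≥0∞) ^ (-q) := ENNReal.tsum_le_tsum hle
    _ = ∑' t : ℕ, (m : ℝ≥0∞) * ((m * (t + 1) : ℕ) : ℝ≥0∞) ^ (-q) := by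
        rw [ENNReal.tsum_prod (f := fun t (_ : Fin m) => ((m * (t + 1) : ℕ) : ℝ≥0∞) ^ (-q))]
        simp [tsum_fintype]
    _ = (m : ℝ≥0∞) ^ (1 - q) * ∑' j : ℕ, ((j + 1 : ℕ) : ℝ≥0∞) ^ (-q) := by
        simp_rw [Nat.cast_mul, mul_rpow_of_ne_top (natCast_ne_top m) (natCast_ne_top _),
          ← mul_assoc, ENNReal.tsum_mul_left]
        rw [sub_eq_add_neg, rpow_add _ _ hm0 (natCast_ne_top m), rpow_one]

theorem tsum_tail_rpow_le {q : ℝ} (hq : 0 ≤ q) {x : ℕ → ℝ≥0∞} {M : ℝ≥0∞}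
    (hM : ∀ n : ℕ, (n : ℝ≥0∞) * x n ≤ M) {m : ℕ} (hm : m ≠ 0) :
    ∑' k : ℕ, x (m + k) ^ q ≤ M ^ q * ∑' k : ℕ, ((m + k : ℕ) : ℝ≥0∞) ^ (-q) := by
  rw [← ENNReal.tsum_mul_left]
  refine ENNReal.tsum_le_tsum fun k => ?_
  have : x (m + k) ≤ M / (m + k : ℕ) := by
    rw [ENNReal.le_div_iff_mul_le (Or.inl (by simp [hm])) (Or.inl (natCast_ne_top _)), mul_comm]
    exact hM _
  calc x (m + k) ^ q ≤ (M / (m + k : ℕ)) ^ q := rpow_le_rpow this hq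
    _ = M ^ q * ((m + k : ℕ) : ℝ≥0∞) ^ (-q) := by
      rw [div_rpow_of_nonneg _ _ hq, div_eq_mul_inv, rpow_neg]

theorem iSup_natCast_mul_mean_tail_rpow_le {q : ℝ} (hq : 0 < q) (x : ℕ → ℝ≥0∞) :
    ⨆ n : ℕ, ((n + 1 : ℕ) : ℝ≥0∞) * ((1 / ((n + 1 : ℕ) : ℝ≥0∞)) *
        ∑' k : ℕ, x (n + 1 + k) ^ q) ^ (1 / q) ≤
      (∑' j : ℕ, ((j + 1 : ℕ) : ℝ≥0∞) ^ (-q)) ^ (1 / q) *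
        ⨆ n : ℕ, ((n + 1 : ℕ) : ℝ≥0∞) * x (n + 1) := by
  set M := ⨆ n : ℕ, ((n + 1 : ℕ) : ℝ≥0∞) * x (n + 1)
  set Z := ∑' j : ℕ, ((j + 1 : ℕ) : ℝ≥0∞) ^ (-q)
  have hM : ∀ n : ℕ, (n : ℝ≥0∞) * x n ≤ M := by
    rintro (_ | n)
    · simp
    · exact le_iSup (fun n : ℕ => ((n + 1 : ℕ) : ℝ≥0∞) * x (n + 1)) n
  refine iSup_le fun n => ?_
  set m : ℕ := n + 1
  have hm : m ≠ 0 := Nat.succ_ne_zero n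
  have hm0 : (m : ℝ≥0∞) ≠ 0 := by exact_mod_cast hm
  have hcancel : (m : ℝ≥0∞) ^ q * (1 / m) * (m : ℝ≥0∞) ^ (1 - q) = 1 := by
    rw [one_div, ← rpow_neg_one, ← rpow_add _ _ hm0 (natCast_ne_top m),
      ← rpow_add _ _ hm0 (natCast_ne_top m), show q + -1 + (1 - q) = 0 by ring, rpow_zero]
  have hS : (m : ℝ≥0∞) ^ q * (1 / m * ∑' k, x (m + k) ^ q) ≤ Z * M ^ q := calc
    _ ≤ (m : ℝ≥0∞) ^ q * (1 / m * (M ^ q * ((m : ℝ≥0∞) ^ (1 - q) * Z))) := by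
        gcongr
        exact (tsum_tail_rpow_le hq.le hM hm).trans
          (mul_le_mul_right (tsum_natCast_add_rpow_neg_le hq.le hm) _)
    _ = (m : ℝ≥0∞) ^ q * (1 / m) * (m : ℝ≥0∞) ^ (1 - q) * (Z * M ^ q) := by ring
    _ = Z * M ^ q := by rw [hcancel, one_mul]
  calc (m : ℝ≥0∞) * (1 / m * ∑' k, x (m + k) ^ q) ^ (1 / q)
      = ((m : ℝ≥0∞) ^ q * (1 / m * ∑' k, x (m + k) ^ q)) ^ (1 / q) := by
        rw [mul_rpow_of_nonneg ((m : ℝ≥0∞) ^ q) _ (by positivity), ← rpow_mul,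
          mul_one_div_cancel hq.ne', rpow_one]
    _ ≤ (Z * M ^ q) ^ (1 / q) := rpow_le_rpow hS (by positivity)
    _ = Z ^ (1 / q) * M := by
        rw [mul_rpow_of_nonneg _ _ (by positivity), ← rpow_mul, mul_one_div_cancel hq.ne',
          rpow_one]

theorem ofReal_one_div_natCast_rpow {m : ℕ} (hm : m ≠ 0) (q : ℝ) :
    ENNReal.ofReal (1 / (m : ℝ)) ^ q = (m : ℝ≥0∞) ^ (-q) := by
  rw [one_div, ofReal_inv_of_pos (by positivity), ofReal_natCast, inv_rpow, rpow_neg]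

theorem natCast_mul_ofReal_one_div {m : ℕ} (hm : m ≠ 0) :
    (m : ℝ≥0∞) * ENNReal.ofReal (1 / (m : ℝ)) = 1 := by
  rw [one_div, ofReal_inv_of_pos (by positivity), ofReal_natCast,
    ENNReal.mul_inv_cancel (by exact_mod_cast hm) (natCast_ne_top m)]

theorem ofReal_tsum_natCast_add_one_rpow_neg {q : ℝ} (hq : 1 < q) :
    ENNReal.ofReal (∑' n : ℕ, ((n + 1 : ℕ) : ℝ) ^ (-q)) =
      ∑' n : ℕ, ((n + 1 : ℕ) : ℝ≥0∞) ^ (-q) := by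
  have hsum : Summable fun n : ℕ => ((n + 1 : ℕ) : ℝ) ^ (-q) := by
    exact_mod_cast (summable_nat_add_iff 1).2 (Real.summable_nat_rpow.2 (neg_lt_neg hq))
  rw [ofReal_tsum_of_nonneg (fun _ => by positivity) hsum]
  refine tsum_congr fun n => ?_
  rw [← ofReal_rpow_of_pos (by positivity), ofReal_natCast]

end ENNReal

/-- Lower weak discrete Stechkin inequality with the optimal constant `ζ(q)^{1/q}`,
optimality being witnessed by the sequence `a_n = 1/n`. -/
theorem weak_stechkin_lower (q : ℝ) (hq : 1 < q) :
    (∀ a : ℕ → ℝ, (∀ n, 0 ≤ a n) → Antitone a →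
      (⨆ n : ℕ, ((n + 1 : ℕ) : ℝ≥0∞) * ((1 / ((n + 1 : ℕ) : ℝ≥0∞)) *
          ∑' k : ℕ, ENNReal.ofReal (a (n + 1 + k)) ^ q) ^ (1 / q)) ≤
        ENNReal.ofReal ((∑' n : ℕ, ((n + 1 : ℕ) : ℝ) ^ (-q)) ^ (1 / q)) *
          ⨆ n : ℕ, ((n + 1 : ℕ) : ℝ≥0∞) * ENNReal.ofReal (a (n + 1))) ∧
    (⨆ n : ℕ, ((n + 1 : ℕ) : ℝ≥0∞) * ((1 / ((n + 1 : ℕ) : ℝ≥0∞)) *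
        ∑' k : ℕ, ENNReal.ofReal (1 / ((n + 1 + k : ℕ) : ℝ)) ^ q) ^ (1 / q)) =
      ENNReal.ofReal ((∑' n : ℕ, ((n + 1 : ℕ) : ℝ) ^ (-q)) ^ (1 / q)) *
        ⨆ n : ℕ, ((n + 1 : ℕ) : ℝ≥0∞) * ENNReal.ofReal (1 / ((n + 1 : ℕ) : ℝ)) := by
  have hq0 : 0 < q := zero_lt_one.trans hq
  have hζ : ENNReal.ofReal ((∑' n : ℕ, ((n + 1 : ℕ) : ℝ) ^ (-q)) ^ (1 / q)) =
      (∑' n : ℕ, ((n + 1 : ℕ) : ℝ≥0∞) ^ (-q)) ^ (1 / q) := by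
    rw [← ENNReal.ofReal_rpow_of_nonneg (tsum_nonneg fun _ => by positivity) (by positivity),
      ENNReal.ofReal_tsum_natCast_add_one_rpow_neg hq]
  have hweak : ⨆ n : ℕ, ((n + 1 : ℕ) : ℝ≥0∞) * ENNReal.ofReal (1 / ((n + 1 : ℕ) : ℝ)) = 1 := by
    simp only [ENNReal.natCast_mul_ofReal_one_div (Nat.succ_ne_zero _), iSup_const]
  refine ⟨fun a _ _ => ?_, ?_⟩
  · rw [hζ]
    exact ENNReal.iSup_natCast_mul_mean_tail_rpow_le hq0 fun m => ENNReal.ofReal (a m)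
  rw [hζ, hweak, mul_one]
  refine le_antisymm ?_ (le_trans ?_ (le_iSup _ 0))
  · have h := ENNReal.iSup_natCast_mul_mean_tail_rpow_le hq0 fun m => ENNReal.ofReal (1 / (m : ℝ))
    rwa [hweak, mul_one] at h
  · have hterm (k : ℕ) : ENNReal.ofReal (1 / ((0 + 1 + k : ℕ) : ℝ)) ^ q =
        ((k + 1 : ℕ) : ℝ≥0∞) ^ (-q) := by
      rw [ENNReal.ofReal_one_div_natCast_rpow (by omega), Nat.zero_add, Nat.add_comm]
    simp only [hterm, Nat.zero_add, Nat.cast_one, div_one, one_mul, le_refl]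
end

section
/- Let 1 < q < ∞. Then sup_{n∈ℕ} n^{1−1/q}·(∑_{k=n}^∞ k^{−q})^{1/q} = ζ(q)^{1/q}, and the supremum is attained at n = 1. -/
open Real

/-!
Cut the tail `k ≥ m` into the blocks `m (i + 1) ≤ k < m (i + 2)`. On each block `k^{-q}` is at
most `(m (i + 1))^{-q}`, so the tail is at most `m · m^{-q} · ζ(q) = m^{1-q} ζ(q)`, and the factor
`m^{1-1/q}` exactly cancels `(m^{1-q})^{1/q}`. For `m = 1` the bound is an equality.
-/

theorem AntitoneOn.tsum_nat_add_le_mul_tsum {f : ℕ → ℝ} (hf : AntitoneOn f (Set.Ici 1))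
    (hs : Summable f) (m : ℕ) [NeZero m] :
    ∑' j, f (m + j) ≤ m * ∑' i, f (m * (i + 1)) := by
  have hblock : HasSum (fun i => ∑ r : Fin m, f (m + (i * m + r))) (∑' j, f (m + j)) :=
    ((Nat.divModEquiv m).symm.hasSum_iff.2
      (hs.comp_injective (add_right_injective m)).hasSum).prod_fiberwise
      fun i => hasSum_fintype _
  have hmul : HasSum (fun i => m * f (m * (i + 1))) (m * ∑' i, f (m * (i + 1))) :=
    ((hs.comp_injective fun a b h => by simpa [NeZero.ne m] using h).hasSum).mul_left _
  refine hasSum_le (fun i => ?_) hblock hmul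
  have hstart : 1 ≤ m * (i + 1) := Nat.one_le_iff_ne_zero.2 (by simp [NeZero.ne m])
  calc ∑ r : Fin m, f (m + (i * m + r)) ≤ ∑ _r : Fin m, f (m * (i + 1)) :=
        Finset.sum_le_sum fun r _ => hf hstart (by simp; omega) (by nlinarith)
    _ = m * f (m * (i + 1)) := by simp

theorem antitoneOn_natCast_rpow_neg {q : ℝ} (hq : 0 ≤ q) :
    AntitoneOn (fun k : ℕ => (k : ℝ) ^ (-q)) (Set.Ici 1) := fun a ha _ _ hab =>
  rpow_le_rpow_of_nonpos (by exact_mod_cast ha) (by exact_mod_cast hab) (neg_nonpos.2 hq)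

theorem tsum_nat_add_rpow_neg_le {q : ℝ} (hq : 1 < q) (m : ℕ) [NeZero m] :
    ∑' j : ℕ, ((m + j : ℕ) : ℝ) ^ (-q) ≤
      (m : ℝ) ^ (1 - q) * ∑' i : ℕ, ((i + 1 : ℕ) : ℝ) ^ (-q) := by
  have hm : (0 : ℝ) < m := by exact_mod_cast NeZero.pos m
  calc ∑' j : ℕ, ((m + j : ℕ) : ℝ) ^ (-q)
      ≤ m * ∑' i : ℕ, ((m * (i + 1) : ℕ) : ℝ) ^ (-q) :=
        (antitoneOn_natCast_rpow_neg (by linarith)).tsum_nat_add_le_mul_tsum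
          (summable_nat_rpow.2 (by linarith)) m
    _ = (m : ℝ) ^ (1 - q) * ∑' i : ℕ, ((i + 1 : ℕ) : ℝ) ^ (-q) := by
        simp_rw [Nat.cast_mul, mul_rpow hm.le (Nat.cast_nonneg _), tsum_mul_left, ← mul_assoc,
          sub_eq_add_neg, rpow_add hm, rpow_one]

theorem natCast_rpow_mul_tsum_nat_add_rpow_le {q : ℝ} (hq : 1 < q) (m : ℕ) [NeZero m] :
    (m : ℝ) ^ (1 - 1 / q) * (∑' j : ℕ, ((m + j : ℕ) : ℝ) ^ (-q)) ^ (1 / q) ≤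
      (∑' i : ℕ, ((i + 1 : ℕ) : ℝ) ^ (-q)) ^ (1 / q) := by
  have hm : (0 : ℝ) < m := by exact_mod_cast NeZero.pos m
  have hq0 : 0 < q := by linarith
  have htail := tsum_nat_add_rpow_neg_le hq m
  set Z := ∑' i : ℕ, ((i + 1 : ℕ) : ℝ) ^ (-q)
  calc (m : ℝ) ^ (1 - 1 / q) * (∑' j : ℕ, ((m + j : ℕ) : ℝ) ^ (-q)) ^ (1 / q)
      ≤ (m : ℝ) ^ (1 - 1 / q) * ((m : ℝ) ^ (1 - q) * Z) ^ (1 / q) := by gcongr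
    _ = (m : ℝ) ^ (1 - 1 / q + (1 - q) * (1 / q)) * Z ^ (1 / q) := by
        rw [mul_rpow (by positivity) (tsum_nonneg fun i => by positivity), ← rpow_mul hm.le,
          ← mul_assoc, ← rpow_add hm]
    _ = Z ^ (1 / q) := by
        rw [show 1 - 1 / q + (1 - q) * (1 / q) = 0 by field_simp; ring, rpow_zero, one_mul]

/-- `sup_{n≥1} n^{1−1/q} (∑_{k=n}^∞ k^{-q})^{1/q} = ζ(q)^{1/q}`, attained at `n = 1`. -/
theorem weak_stechkin_sup_zeta (q : ℝ) (hq : 1 < q) :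
    (⨆ n : ℕ, ((n + 1 : ℕ) : ℝ) ^ (1 - 1 / q) *
        (∑' k : ℕ, ((n + 1 + k : ℕ) : ℝ) ^ (-q)) ^ (1 / q)) =
      (∑' n : ℕ, ((n + 1 : ℕ) : ℝ) ^ (-q)) ^ (1 / q) ∧
    ∀ n : ℕ, ((n + 1 : ℕ) : ℝ) ^ (1 - 1 / q) *
        (∑' k : ℕ, ((n + 1 + k : ℕ) : ℝ) ^ (-q)) ^ (1 / q) ≤
      ((1 : ℕ) : ℝ) ^ (1 - 1 / q) * (∑' k : ℕ, ((1 + k : ℕ) : ℝ) ^ (-q)) ^ (1 / q) := by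
  have hbound (n : ℕ) := natCast_rpow_mul_tsum_nat_add_rpow_le hq (n + 1)
  have hone :
      ((1 : ℕ) : ℝ) ^ (1 - 1 / q) * (∑' k : ℕ, ((1 + k : ℕ) : ℝ) ^ (-q)) ^ (1 / q) =
        (∑' n : ℕ, ((n + 1 : ℕ) : ℝ) ^ (-q)) ^ (1 / q) := by
    simp_rw [Nat.cast_one, one_rpow, one_mul, Nat.add_comm 1]
  rw [hone]
  exact ⟨IsGreatest.csSup_eq ⟨⟨0, hone⟩, Set.forall_mem_range.2 hbound⟩, hbound⟩
end

section
/- Let 1 < q < ∞. For every nonincreasing nonnegative sequence (a_n), sup_{n∈ℕ} n·a_n ≤ q^{1/q}·(1−1/q)^{−(1−1/q)} · sup_{n∈ℕ} n·(1/n · ∑_{k=n}^∞ a_k^q)^{1/q}, i.e. the upper weak discrete Stechkin inequality holds with constant C = (1/q)^{−1/q}·(1−1/q)^{−(1−1/q)}, and this constant is optimal. -/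
open Real
open scoped ENNReal

/-!
Write `θ = 1 - 1/q` and `c = θ^θ (1/q)^(1/q)`, so that the constant is `1/c`. The sharp weighted
AM-GM inequality says that `x^θ y^(1/q) ≤ c (x + y)`, with equality at `(x, y) = (θN, N/q)`.

For a nonincreasing sequence and `j ≤ N`, the tail `∑_{k ≥ j} a_k^q` is at least
`(N - j + 1) a_N^q`, so the Stechkin supremum is at least `j^θ (N - j + 1)^(1/q) a_N`. Taking
`j ≈ θN` makes this at least `c N a_N`. Conversely, for the indicator of `{k ≤ M}` the weak
supremum is `M` and, by AM-GM, every Stechkin term `j^θ (M - j + 1)^(1/q)` is at most `c (M + 1)`.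
So an admissible constant `C` satisfies `M ≤ C c (M + 1)` for all `M`, that is `C ≥ 1/c`.
-/

namespace Real

variable {p : ℝ}

theorem rpow_one_sub_mul_rpow_le_mul_add (hp0 : 0 < p) (hp1 : p < 1) {x y : ℝ} (hx : 0 ≤ x)
    (hy : 0 ≤ y) : x ^ (1 - p) * y ^ p ≤ (1 - p) ^ (1 - p) * p ^ p * (x + y) := by
  have hθ : 0 < 1 - p := by linarith
  have hx' : (1 - p) * (x / (1 - p)) = x := mul_div_cancel₀ x hθ.ne'
  have hy' : p * (y / p) = y := mul_div_cancel₀ y hp0.ne'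
  calc x ^ (1 - p) * y ^ p
      = (1 - p) ^ (1 - p) * p ^ p * ((x / (1 - p)) ^ (1 - p) * (y / p) ^ p) := by
        conv_lhs => rw [← hx', ← hy']
        rw [mul_rpow hθ.le (by positivity), mul_rpow hp0.le (by positivity)]
        ring
    _ ≤ (1 - p) ^ (1 - p) * p ^ p * ((1 - p) * (x / (1 - p)) + p * (y / p)) := by
        gcongr
        exact geom_mean_le_arith_mean2_weighted hθ.le hp0.le (by positivity) (by positivity)
          (by ring)
    _ = (1 - p) ^ (1 - p) * p ^ p * (x + y) := by rw [hx', hy']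

theorem mul_le_rpow_one_sub_mul_rpow (hp0 : 0 ≤ p) (hp1 : p ≤ 1) {N x y : ℝ} (hN : 0 ≤ N)
    (hx : (1 - p) * N ≤ x) (hy : p * N ≤ y) :
    (1 - p) ^ (1 - p) * p ^ p * N ≤ x ^ (1 - p) * y ^ p := by
  have hθ : 0 ≤ 1 - p := by linarith
  calc (1 - p) ^ (1 - p) * p ^ p * N = ((1 - p) * N) ^ (1 - p) * (p * N) ^ p := by
        have hN1 : N ^ (1 - p) * N ^ p = N := by
          rw [← rpow_add' hN (by norm_num), sub_add_cancel, rpow_one]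
        conv_lhs => rw [← hN1]
        rw [mul_rpow hθ hN, mul_rpow hp0 hN]
        ring
    _ ≤ x ^ (1 - p) * y ^ p :=
        mul_le_mul (rpow_le_rpow (by positivity) hx hθ) (rpow_le_rpow (by positivity) hy hp0)
          (by positivity) (rpow_nonneg ((by positivity : 0 ≤ (1 - p) * N).trans hx) _)

theorem rpow_neg_mul_rpow_neg (hp0 : 0 ≤ p) (hp1 : p ≤ 1) :
    p ^ (-p) * (1 - p) ^ (-(1 - p)) = ((1 - p) ^ (1 - p) * p ^ p)⁻¹ := by
  rw [rpow_neg hp0, rpow_neg (by linarith), mul_inv, mul_comm]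

end Real

theorem exists_add_eq_mul_le_rpow_mul_rpow {p : ℝ} (hp0 : 0 < p) (hp1 : p ≤ 1) (n : ℕ) :
    ∃ j m : ℕ, j + m = n ∧ (1 - p) ^ (1 - p) * p ^ p * (n + 1 : ℕ) ≤
      ((j + 1 : ℕ) : ℝ) ^ (1 - p) * ((m + 1 : ℕ) : ℝ) ^ p := by
  have hθ : 0 ≤ (1 - p) * (n + 1) := by nlinarith
  set j := ⌊(1 - p) * (n + 1)⌋₊
  have hjn : j ≤ n := Nat.lt_succ_iff.mp <| (Nat.floor_lt hθ).2 (by push_cast; nlinarith)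
  refine ⟨j, n - j, Nat.add_sub_cancel' hjn, ?_⟩
  refine Real.mul_le_rpow_one_sub_mul_rpow hp0.le hp1 (by positivity) ?_ ?_
  · push_cast
    exact (Nat.lt_floor_add_one _).le
  · have := Nat.floor_le hθ
    push_cast [Nat.cast_sub hjn]
    linarith

namespace ENNReal

theorem mul_rpow_inv_mul {x : ℝ≥0∞} (hx0 : x ≠ 0) (hx : x ≠ ∞) (y : ℝ≥0∞) {r : ℝ} (hr : 0 ≤ r) :
    x * (x⁻¹ * y) ^ r = x ^ (1 - r) * y ^ r := by
  rw [mul_rpow_of_nonneg _ _ hr, inv_rpow, ← rpow_neg, sub_eq_add_neg, rpow_add _ _ hx0 hx,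
    rpow_one, mul_assoc]

theorem natCast_rpow_mul_natCast_rpow (x y : ℕ) {r s : ℝ} (hr : 0 ≤ r) (hs : 0 ≤ s) :
    (x : ℝ≥0∞) ^ r * (y : ℝ≥0∞) ^ s = ENNReal.ofReal ((x : ℝ) ^ r * (y : ℝ) ^ s) := by
  rw [ofReal_mul (by positivity), ← ofReal_rpow_of_nonneg (Nat.cast_nonneg _) hr,
    ← ofReal_rpow_of_nonneg (Nat.cast_nonneg _) hs, ofReal_natCast, ofReal_natCast]

theorem ofReal_inv_le_of_forall_natCast_le {C : ℝ≥0∞} {c : ℝ} (hc : 0 < c)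
    (h : ∀ M : ℕ, (M : ℝ≥0∞) ≤ C * ENNReal.ofReal (c * (M + 1))) : ENNReal.ofReal c⁻¹ ≤ C := by
  rcases eq_or_ne C ∞ with rfl | hC
  · exact le_top
  have hK : ∀ M : ℕ, (M : ℝ) / (M + 1) ≤ C.toReal * c := fun M => by
    rw [div_le_iff₀ (by positivity), mul_assoc]
    have := toReal_mono (mul_ne_top hC ofReal_ne_top) (h M)
    rwa [toReal_mul, toReal_ofReal (by positivity), toReal_natCast] at this
  exact ofReal_le_of_le_toReal <| (inv_le_iff_one_le_mul₀ hc).2 <|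
    le_of_tendsto' (tendsto_natCast_div_add_atTop (1 : ℝ)) hK

end ENNReal

theorem Antitone.natCast_add_one_mul_le_tsum {f : ℕ → ℝ≥0∞} (hf : Antitone f) (m : ℕ) :
    ((m + 1 : ℕ) : ℝ≥0∞) * f m ≤ ∑' k, f k := by
  calc ((m + 1 : ℕ) : ℝ≥0∞) * f m = (Finset.range (m + 1)).card • f m := by
        rw [Finset.card_range, nsmul_eq_mul]
    _ ≤ ∑ k ∈ Finset.range (m + 1), f k :=
        Finset.card_nsmul_le_sum _ _ _ fun k hk => hf (Finset.mem_range_succ_iff.mp hk)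
    _ ≤ ∑' k, f k := ENNReal.sum_le_tsum _

section Stechkin

/-- `sup_{n ≥ 1} n a_n`; below, `stechkinSup q a = sup_{n ≥ 1} n (n⁻¹ ∑_{k ≥ n} a_k^q)^(1/q)`. -/
noncomputable def weakSup (a : ℕ → ℝ) : ℝ≥0∞ :=
  ⨆ n : ℕ, ((n + 1 : ℕ) : ℝ≥0∞) * ENNReal.ofReal (a (n + 1))

noncomputable def stechkinTerm (q : ℝ) (a : ℕ → ℝ) (n : ℕ) : ℝ≥0∞ :=
  ((n + 1 : ℕ) : ℝ≥0∞) * ((1 / ((n + 1 : ℕ) : ℝ≥0∞)) *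
    ∑' k : ℕ, ENNReal.ofReal (a (n + 1 + k)) ^ q) ^ (1 / q)

noncomputable def stechkinSup (q : ℝ) (a : ℕ → ℝ) : ℝ≥0∞ := ⨆ n : ℕ, stechkinTerm q a n

variable {q : ℝ} {a : ℕ → ℝ}

theorem stechkinTerm_eq (hq : 0 < q) (n : ℕ) :
    stechkinTerm q a n = ((n + 1 : ℕ) : ℝ≥0∞) ^ (1 - 1 / q) *
      (∑' k : ℕ, ENNReal.ofReal (a (n + 1 + k)) ^ q) ^ (1 / q) := by
  rw [stechkinTerm, one_div ((n + 1 : ℕ) : ℝ≥0∞),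
    ENNReal.mul_rpow_inv_mul (by simp) (ENNReal.natCast_ne_top _) _ (by positivity)]

theorem weakSup_le_mul_stechkinSup (hq : 1 < q) (ha : Antitone a) :
    weakSup a ≤ ENNReal.ofReal ((1 / q) ^ (-(1 / q)) * (1 - 1 / q) ^ (-(1 - 1 / q))) *
      stechkinSup q a := by
  have hq0 : 0 < q := by linarith
  have hp0 : 0 < 1 / q := by positivity
  have hp1 : 1 / q < 1 := (div_lt_one hq0).2 hq
  set p := 1 / q
  rw [Real.rpow_neg_mul_rpow_neg hp0.le hp1.le]
  set c := (1 - p) ^ (1 - p) * p ^ p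
  have hc : 0 < c := by positivity
  refine iSup_le fun n => ?_
  obtain ⟨j, m, rfl, hjm⟩ := exists_add_eq_mul_le_rpow_mul_rpow hp0 hp1.le n
  set b := ENNReal.ofReal (a (j + m + 1))
  have htail : ((m + 1 : ℕ) : ℝ≥0∞) * b ^ q ≤ ∑' k, ENNReal.ofReal (a (j + 1 + k)) ^ q := by
    have hanti : Antitone fun k => ENNReal.ofReal (a (j + 1 + k)) ^ q := fun k l hkl =>
      ENNReal.rpow_le_rpow (ENNReal.ofReal_le_ofReal (ha (by omega))) hq0.le
    simpa only [add_right_comm j 1 m] using hanti.natCast_add_one_mul_le_tsum m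
  have hnum : ((j + m + 1 : ℕ) : ℝ≥0∞) ≤
      ENNReal.ofReal c⁻¹ * (((j + 1 : ℕ) : ℝ≥0∞) ^ (1 - p) * ((m + 1 : ℕ) : ℝ≥0∞) ^ p) := by
    rw [ENNReal.natCast_rpow_mul_natCast_rpow _ _ (by linarith) hp0.le,
      ← ENNReal.ofReal_mul (by positivity), ← ENNReal.ofReal_natCast]
    exact ENNReal.ofReal_le_ofReal ((le_inv_mul_iff₀ hc).2 hjm)
  calc ((j + m + 1 : ℕ) : ℝ≥0∞) * b
      ≤ ENNReal.ofReal c⁻¹ * (((j + 1 : ℕ) : ℝ≥0∞) ^ (1 - p) * ((m + 1 : ℕ) : ℝ≥0∞) ^ p) * b := by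
        gcongr
    _ = ENNReal.ofReal c⁻¹ *
          (((j + 1 : ℕ) : ℝ≥0∞) ^ (1 - p) * (((m + 1 : ℕ) : ℝ≥0∞) * b ^ q) ^ p) := by
        rw [ENNReal.mul_rpow_of_nonneg _ _ hp0.le, ← ENNReal.rpow_mul, mul_one_div_cancel hq0.ne',
          ENNReal.rpow_one, mul_assoc, mul_assoc]
    _ ≤ ENNReal.ofReal c⁻¹ * stechkinTerm q a j := by
        rw [stechkinTerm_eq hq0]
        gcongr
    _ ≤ ENNReal.ofReal c⁻¹ * stechkinSup q a := by
        gcongr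
        exact le_iSup (stechkinTerm q a) j

def boxSeq (M : ℕ) (k : ℕ) : ℝ := if k ≤ M then 1 else 0

theorem boxSeq_nonneg (M k : ℕ) : 0 ≤ boxSeq M k := by
  unfold boxSeq; split_ifs <;> norm_num

theorem boxSeq_antitone (M : ℕ) : Antitone (boxSeq M) := fun k l hkl => by
  unfold boxSeq; split_ifs <;> first | omega | norm_num

theorem natCast_le_weakSup_boxSeq (M : ℕ) : (M : ℝ≥0∞) ≤ weakSup (boxSeq M) := by
  obtain _ | m := M
  · simp
  · calc ((m + 1 : ℕ) : ℝ≥0∞)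
          = ((m + 1 : ℕ) : ℝ≥0∞) * ENNReal.ofReal (boxSeq (m + 1) (m + 1)) := by simp [boxSeq]
      _ ≤ weakSup (boxSeq (m + 1)) :=
          le_iSup (fun n : ℕ => ((n + 1 : ℕ) : ℝ≥0∞) * ENNReal.ofReal (boxSeq (m + 1) (n + 1))) m

theorem tsum_ofReal_boxSeq_rpow (hq : 0 < q) (M n : ℕ) :
    ∑' k : ℕ, ENNReal.ofReal (boxSeq M (n + 1 + k)) ^ q = ((M - n : ℕ) : ℝ≥0∞) := by
  have hterm : ∀ k, ENNReal.ofReal (boxSeq M (n + 1 + k)) ^ q = if k < M - n then 1 else 0 := by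
    intro k
    unfold boxSeq
    split_ifs <;> first | omega | simp [hq]
  simp_rw [hterm]
  rw [tsum_eq_sum (s := Finset.range (M - n)) (by simp_all),
    Finset.sum_ite_of_true fun k hk => Finset.mem_range.mp hk]
  simp

theorem stechkinSup_boxSeq_le (hq : 1 < q) (M : ℕ) :
    stechkinSup q (boxSeq M) ≤
      ENNReal.ofReal ((1 - 1 / q) ^ (1 - 1 / q) * (1 / q) ^ (1 / q) * (M + 1)) := by
  have hq0 : 0 < q := by linarith
  have hp0 : 0 < 1 / q := by positivity
  have hp1 : 1 / q < 1 := (div_lt_one hq0).2 hq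
  refine iSup_le fun n => ?_
  rw [stechkinTerm_eq hq0, tsum_ofReal_boxSeq_rpow hq0]
  rcases le_or_gt M n with hMn | hnM
  · rw [Nat.sub_eq_zero_of_le hMn, Nat.cast_zero, ENNReal.zero_rpow_of_pos hp0, mul_zero]
    exact zero_le
  rw [ENNReal.natCast_rpow_mul_natCast_rpow _ _ (by linarith) hp0.le]
  refine ENNReal.ofReal_le_ofReal ?_
  have hsum : ((n + 1 : ℕ) : ℝ) + ((M - n : ℕ) : ℝ) = M + 1 := by
    push_cast [Nat.cast_sub hnM.le]; ring
  rw [← hsum]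
  exact Real.rpow_one_sub_mul_rpow_le_mul_add hp0 hp1 (by positivity) (by positivity)

theorem le_of_forall_weakSup_le_mul_stechkinSup (hq : 1 < q) {C : ℝ≥0∞}
    (h : ∀ a : ℕ → ℝ, (∀ n, 0 ≤ a n) → Antitone a → weakSup a ≤ C * stechkinSup q a) :
    ENNReal.ofReal ((1 / q) ^ (-(1 / q)) * (1 - 1 / q) ^ (-(1 - 1 / q))) ≤ C := by
  have hp0 : 0 < 1 / q := by positivity
  have hp1 : 1 / q < 1 := (div_lt_one (by linarith)).2 hq
  rw [Real.rpow_neg_mul_rpow_neg hp0.le hp1.le]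
  refine ENNReal.ofReal_inv_le_of_forall_natCast_le (by positivity) fun M => ?_
  calc (M : ℝ≥0∞) ≤ weakSup (boxSeq M) := natCast_le_weakSup_boxSeq M
    _ ≤ C * stechkinSup q (boxSeq M) := h _ (boxSeq_nonneg M) (boxSeq_antitone M)
    _ ≤ _ := by gcongr; exact stechkinSup_boxSeq_le hq M

end Stechkin

/-- Upper weak discrete Stechkin inequality with optimal constant
`C = (1/q)^{-1/q} (1 − 1/q)^{-(1−1/q)}`. -/
theorem weak_stechkin_upper (q : ℝ) (hq : 1 < q) :
    (∀ a : ℕ → ℝ, (∀ n, 0 ≤ a n) → Antitone a →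
      (⨆ n : ℕ, ((n + 1 : ℕ) : ℝ≥0∞) * ENNReal.ofReal (a (n + 1))) ≤
        ENNReal.ofReal ((1 / q) ^ (-(1 / q)) * (1 - 1 / q) ^ (-(1 - 1 / q))) *
          ⨆ n : ℕ, ((n + 1 : ℕ) : ℝ≥0∞) * ((1 / ((n + 1 : ℕ) : ℝ≥0∞)) *
            ∑' k : ℕ, ENNReal.ofReal (a (n + 1 + k)) ^ q) ^ (1 / q)) ∧
    (∀ C : ℝ≥0∞,
      (∀ a : ℕ → ℝ, (∀ n, 0 ≤ a n) → Antitone a →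
        (⨆ n : ℕ, ((n + 1 : ℕ) : ℝ≥0∞) * ENNReal.ofReal (a (n + 1))) ≤
          C * ⨆ n : ℕ, ((n + 1 : ℕ) : ℝ≥0∞) * ((1 / ((n + 1 : ℕ) : ℝ≥0∞)) *
            ∑' k : ℕ, ENNReal.ofReal (a (n + 1 + k)) ^ q) ^ (1 / q)) →
      ENNReal.ofReal ((1 / q) ^ (-(1 / q)) * (1 - 1 / q) ^ (-(1 - 1 / q))) ≤ C) :=
  ⟨fun _ _ ha => weakSup_le_mul_stechkinSup hq ha,
    fun _ hC => le_of_forall_weakSup_le_mul_stechkinSup hq hC⟩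
end

section
/- Let 1 < q < ∞ and N ∈ ℕ. Then sup_{1≤n≤N} n^{1−1/q}·((N−n+1)/N^q)^{1/q} ≤ ((N+1)/N)·(1/q)^{1/q}·(1−1/q)^{1−1/q}. -/
/-!
Write `θ = 1/q`. Since `(N^q)^θ = N`, the left side is `n^{1-θ} (N-n+1)^θ / N`, and the weighted
AM–GM inequality applied to `n/(1-θ)` and `(N-n+1)/θ` with weights `1-θ` and `θ` bounds
`n^{1-θ} (N-n+1)^θ` by `(N+1) (1-θ)^{1-θ} θ^θ`.
-/

open Real

namespace Real

theorem rpow_one_sub_mul_rpow_le {x y θ : ℝ} (hx : 0 ≤ x) (hy : 0 ≤ y) (hθ₀ : 0 < θ)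
    (hθ₁ : θ < 1) :
    x ^ (1 - θ) * y ^ θ ≤ (x + y) * θ ^ θ * (1 - θ) ^ (1 - θ) := by
  have h1θ : 0 < 1 - θ := by linarith
  have amgm := geom_mean_le_arith_mean2_weighted h1θ.le hθ₀.le
    (div_nonneg hx h1θ.le) (div_nonneg hy hθ₀.le) (by ring)
  have hsum : (1 - θ) * (x / (1 - θ)) + θ * (y / θ) = x + y := by
    field_simp
  rw [hsum, div_rpow hx h1θ.le, div_rpow hy hθ₀.le] at amgm
  have hw₁ : 0 < (1 - θ) ^ (1 - θ) := rpow_pos_of_pos h1θ _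
  have hw₂ : 0 < θ ^ θ := rpow_pos_of_pos hθ₀ _
  calc x ^ (1 - θ) * y ^ θ
      = x ^ (1 - θ) / (1 - θ) ^ (1 - θ) * (y ^ θ / θ ^ θ) * (θ ^ θ * (1 - θ) ^ (1 - θ)) := by
        field_simp
    _ ≤ (x + y) * (θ ^ θ * (1 - θ) ^ (1 - θ)) := by gcongr
    _ = (x + y) * θ ^ θ * (1 - θ) ^ (1 - θ) := by ring

theorem div_rpow_rpow_one_div {a b q : ℝ} (ha : 0 ≤ a) (hb : 0 ≤ b) (hq : q ≠ 0) :
    (a / b ^ q) ^ (1 / q) = a ^ (1 / q) / b := by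
  rw [div_rpow ha (rpow_nonneg hb q), one_div, rpow_rpow_inv hb hq]

end Real

theorem weak_stechkin_finite_max_general (q : ℝ) (hq : 1 < q) (N : ℕ) :
    ∀ n ∈ Finset.Icc 1 N,
      ((n : ℝ)) ^ (1 - 1 / q) * (((N : ℝ) - n + 1) / (N : ℝ) ^ q) ^ (1 / q) ≤
        (((N : ℝ) + 1) / N) * (1 / q) ^ (1 / q) * (1 - 1 / q) ^ (1 - 1 / q) := by
  intro n hn
  have hnN : (n : ℝ) ≤ N := by exact_mod_cast (Finset.mem_Icc.mp hn).2
  have hq₀ : 0 < q := one_pos.trans hq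
  have hθ₁ : 1 / q < 1 := (div_lt_one hq₀).mpr hq
  have hgap : (0 : ℝ) ≤ N - n + 1 := by linarith
  have key := rpow_one_sub_mul_rpow_le n.cast_nonneg hgap (one_div_pos.mpr hq₀) hθ₁
  rw [← add_assoc, add_sub_cancel] at key
  rw [div_rpow_rpow_one_div hgap N.cast_nonneg hq₀.ne', mul_div_assoc']
  calc _ ≤ ((N : ℝ) + 1) * (1 / q) ^ (1 / q) * (1 - 1 / q) ^ (1 - 1 / q) / N := by gcongr
    _ = _ := by ring

/-- For `1 ≤ n ≤ N`: `n^{1−1/q} ((N−n+1)/N^q)^{1/q} ≤ ((N+1)/N)(1/q)^{1/q}(1−1/q)^{1−1/q}`. -/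
theorem weak_stechkin_finite_max (q : ℝ) (hq : 1 < q) (N : ℕ) (hN : 1 ≤ N) :
    ∀ n ∈ Finset.Icc 1 N,
      ((n : ℝ)) ^ (1 - 1 / q) * (((N : ℝ) - n + 1) / (N : ℝ) ^ q) ^ (1 / q) ≤
        (((N : ℝ) + 1) / N) * (1 / q) ^ (1 / q) * (1 - 1 / q) ^ (1 - 1 / q) :=
  weak_stechkin_finite_max_general q hq N
end

section
/- Let 1 < q < ∞. For every monotonically decreasing f : (0,∞) → [0,∞), ∫_0^∞ (1/t · ∫_t^∞ f(s)^q ds)^{1/q} dt ≤ (π/(q·sin(π/q))) · ∫_0^∞ f(t) dt, and the constant π/(q sin(π/q)) is optimal (attained by f = (1/T)·χ_{(0,T)} for any T > 0). -/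
/-!
Write `f s = ∫₀^∞ 1[l < f s] dl` and apply Minkowski's integral inequality: the `L^q(t, ∞)` norm
of `f` is at most `∫₀^∞ |{f > l} ∩ (t, ∞)|^{1/q} dl`. Since `f` is decreasing, each level set
`{f > l}` is an initial interval of `(0, ∞)`, of length `m l` say, so this bound is
`∫₀^∞ (m l - t)₊^{1/q} dl`. After exchanging the integrals, the substitution `t = m u` turns
`∫₀^∞ t^{-1/q} (m - t)₊^{1/q} dt` into `m · B(1 - 1/q, 1 + 1/q) = m · π / (q sin (π / q))`, and
`∫₀^∞ m l dl = ∫₀^∞ f`. For `f = T⁻¹ 1_{(0,T)}` the tail integral is exactly `T^{-q} (T - t)₊`, so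
the same Beta integral gives equality.
-/

open Real MeasureTheory Set ProbabilityTheory Function
open scoped ENNReal

lemma beta_one_sub_inv_one_add_inv {q : ℝ} (hq : q ≠ 0) :
    beta (1 - 1 / q) (1 + 1 / q) = π / (q * sin (π / q)) := by
  rw [beta, show 1 - 1 / q + (1 + 1 / q) = 2 by ring, Gamma_two, div_one, add_comm 1,
    Gamma_add_one (by positivity)]
  calc Gamma (1 - 1 / q) * (1 / q * Gamma (1 / q))
      = 1 / q * (Gamma (1 / q) * Gamma (1 - 1 / q)) := by ring
    _ = π / (q * sin (π / q)) := by rw [Gamma_mul_Gamma_one_sub, mul_one_div]; ring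

lemma lintegral_Ioo_rpow_mul_one_sub_rpow {α β : ℝ} (hα : 0 < α) (hβ : 0 < β) :
    ∫⁻ x in Ioo 0 1, ENNReal.ofReal (x ^ (α - 1) * (1 - x) ^ (β - 1)) =
      ENNReal.ofReal (beta α β) := by
  have hB : 0 < 1 / beta α β := one_div_pos.2 (beta_pos hα hβ)
  have h := lintegral_betaPDF_eq_one hα hβ
  simp_rw [lintegral_betaPDF, mul_assoc, ENNReal.ofReal_mul hB.le] at h
  rw [lintegral_const_mul' _ _ ENNReal.ofReal_ne_top, mul_comm] at h
  rw [ENNReal.eq_inv_of_mul_eq_one_left h, ← ENNReal.ofReal_inv_of_pos hB, one_div, inv_inv]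

lemma lintegral_Ioo_rpow_mul_sub_rpow {α β r : ℝ} (hα : 0 < α) (hβ : 0 < β) (hr : 0 < r) :
    ∫⁻ t in Ioo 0 r, ENNReal.ofReal (t ^ (α - 1) * (r - t) ^ (β - 1)) =
      ENNReal.ofReal (r ^ (α + β - 1) * beta α β) := by
  have himage : (fun u => r * u) '' Ioo 0 1 = Ioo 0 r := by
    rw [image_mul_left_Ioo hr, mul_zero, mul_one]
  rw [← himage, lintegral_image_eq_lintegral_abs_deriv_mul measurableSet_Ioo
      (fun u _ => (hasDerivAt_const_mul r).hasDerivWithinAt) (mul_right_injective₀ hr.ne').injOn,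
    ENNReal.ofReal_mul (by positivity), ← lintegral_Ioo_rpow_mul_one_sub_rpow hα hβ,
    ← lintegral_const_mul' _ _ ENNReal.ofReal_ne_top]
  refine setLIntegral_congr_fun measurableSet_Ioo fun u hu => ?_
  have hu1 : 0 ≤ 1 - u := by linarith [hu.2]
  have hpow : r ^ (α + β - 1) = r ^ (α - 1) * r ^ (β - 1) * r := by
    rw [← rpow_add hr, ← rpow_add_one hr.ne']
    ring_nf
  rw [← ENNReal.ofReal_mul (abs_nonneg r), ← ENNReal.ofReal_mul (by positivity), abs_of_pos hr,
    show r - r * u = r * (1 - u) by ring, mul_rpow hr.le hu.1.le, mul_rpow hr.le hu1, hpow]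
  ring_nf

lemma one_div_rpow_mul_ofReal_sub_rpow_eq_indicator {a r t : ℝ} (ha : 0 < a) (ht : 0 < t) :
    (1 / ENNReal.ofReal t) ^ a * (ENNReal.ofReal r - ENNReal.ofReal t) ^ a =
      (Iio r).indicator (fun t => ENNReal.ofReal (t ^ (-a) * (r - t) ^ a)) t := by
  rcases lt_or_ge t r with htr | hrt
  · rw [indicator_of_mem (mem_Iio.2 htr), ← ENNReal.ofReal_sub _ ht.le, one_div,
      ← ENNReal.ofReal_inv_of_pos ht, ENNReal.ofReal_rpow_of_pos (inv_pos.2 ht),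
      ENNReal.ofReal_rpow_of_pos (sub_pos.2 htr), ← ENNReal.ofReal_mul (by positivity),
      inv_rpow ht.le, ← rpow_neg ht.le]
  · rw [indicator_of_notMem (notMem_Iio.2 hrt), tsub_eq_zero_of_le (ENNReal.ofReal_le_ofReal hrt),
      ENNReal.zero_rpow_of_pos ha, mul_zero]

lemma lintegral_Ioi_one_div_rpow_mul_sub_rpow {a : ℝ} (ha0 : 0 < a) (ha1 : a < 1) (τ : ℝ≥0∞) :
    ∫⁻ t in Ioi 0, (1 / ENNReal.ofReal t) ^ a * (τ - ENNReal.ofReal t) ^ a =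
      ENNReal.ofReal (beta (1 - a) (1 + a)) * τ := by
  have hB : 0 < beta (1 - a) (1 + a) := beta_pos (by linarith) (by linarith)
  rcases eq_top_or_lt_top τ with rfl | hτ
  · have htop : ∀ t ∈ Ioi (0 : ℝ), (1 / ENNReal.ofReal t) ^ a * (⊤ - ENNReal.ofReal t) ^ a = ⊤ :=
      fun t _ => by
        rw [ENNReal.top_sub ENNReal.ofReal_ne_top, ENNReal.top_rpow_of_pos ha0,
          ENNReal.mul_top (ENNReal.rpow_pos_of_nonneg (by simp) ha0.le).ne']
    rw [setLIntegral_congr_fun measurableSet_Ioi htop, setLIntegral_const, volume_Ioi,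
      ENNReal.top_mul_top, ENNReal.mul_top (by simpa using hB)]
  obtain ⟨r, hr, rfl⟩ : ∃ r, 0 ≤ r ∧ τ = ENNReal.ofReal r :=
    ⟨τ.toReal, ENNReal.toReal_nonneg, (ENNReal.ofReal_toReal hτ.ne).symm⟩
  rw [setLIntegral_congr_fun measurableSet_Ioi
      fun t ht => one_div_rpow_mul_ofReal_sub_rpow_eq_indicator ha0 ht,
    lintegral_indicator measurableSet_Iio, Measure.restrict_restrict measurableSet_Iio,
    Iio_inter_Ioi]
  rcases hr.eq_or_lt with rfl | hr
  · simp
  have h := lintegral_Ioo_rpow_mul_sub_rpow (α := 1 - a) (β := 1 + a) (by linarith) (by linarith) hr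
  rw [show 1 - a - 1 = -a by ring, show 1 + a - 1 = a by ring,
    show 1 - a + (1 + a) - 1 = 1 by ring, rpow_one] at h
  rw [h, mul_comm, ENNReal.ofReal_mul hB.le]

lemma ENNReal.rpow_eq_rpow_sub_one_mul (x : ℝ≥0∞) {p : ℝ} (hp : 1 ≤ p) :
    x ^ p = x ^ (p - 1) * x := by
  simpa using ENNReal.rpow_add_of_nonneg (x := x) (p - 1) 1 (sub_nonneg.2 hp) zero_le_one

theorem ENNReal.lintegral_Lp_lintegral_le {α β : Type*} [MeasurableSpace α] [MeasurableSpace β]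
    {μ : Measure α} {ν : Measure β} [SFinite μ] [SFinite ν] {p : ℝ} (hp : 1 < p)
    {F : α → β → ℝ≥0∞} (hF : Measurable (uncurry F))
    (hfin : ∫⁻ x, (∫⁻ y, F x y ∂ν) ^ p ∂μ ≠ ∞) :
    (∫⁻ x, (∫⁻ y, F x y ∂ν) ^ p ∂μ) ^ (1 / p) ≤ ∫⁻ y, (∫⁻ x, F x y ^ p ∂μ) ^ (1 / p) ∂ν := by
  set G : α → ℝ≥0∞ := fun x => ∫⁻ y, F x y ∂ν
  set A := ∫⁻ x, G x ^ p ∂μ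
  set p' := p.conjExponent
  have hpp' : p.HolderConjugate p' := .conjExponent hp
  have hG : Measurable G := hF.lintegral_prod_right'
  rcases eq_or_ne A 0 with hA0 | hA0
  · rw [hA0, ENNReal.zero_rpow_of_pos hpp'.one_div_pos]
    exact bot_le
  have hholder (y : β) :
      ∫⁻ x, G x ^ (p - 1) * F x y ∂μ ≤ A ^ (1 / p') * (∫⁻ x, F x y ^ p ∂μ) ^ (1 / p) := by
    have hpow (x : α) : (G x ^ (p - 1)) ^ p' = G x ^ p := by
      rw [← ENNReal.rpow_mul, hpp'.sub_one_mul_conj]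
    simpa only [Pi.mul_apply, hpow] using ENNReal.lintegral_mul_le_Lp_mul_Lq μ hpp'.symm
      (hG.pow_const (p - 1)).aemeasurable (hF.of_uncurry_right (y := y)).aemeasurable
  have hA : A ≤ A ^ (1 / p') * ∫⁻ y, (∫⁻ x, F x y ^ p ∂μ) ^ (1 / p) ∂ν :=
    calc A = ∫⁻ x, ∫⁻ y, G x ^ (p - 1) * F x y ∂ν ∂μ := by
          refine lintegral_congr fun x => ?_
          rw [lintegral_const_mul _ hF.of_uncurry_left]
          exact ENNReal.rpow_eq_rpow_sub_one_mul _ hp.le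
      _ = ∫⁻ y, ∫⁻ x, G x ^ (p - 1) * F x y ∂μ ∂ν :=
          lintegral_lintegral_swap ((hG.comp measurable_fst).pow_const _ |>.mul hF).aemeasurable
      _ ≤ ∫⁻ y, A ^ (1 / p') * (∫⁻ x, F x y ^ p ∂μ) ^ (1 / p) ∂ν := lintegral_mono hholder
      _ = A ^ (1 / p') * ∫⁻ y, (∫⁻ x, F x y ^ p ∂μ) ^ (1 / p) ∂ν :=
          lintegral_const_mul' _ _ (ENNReal.rpow_ne_top_of_nonneg hpp'.symm.one_div_nonneg hfin)
  have hA' : A ^ (1 / p') * A ^ (1 / p) = A := by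
    rw [← ENNReal.rpow_add_of_nonneg _ _ hpp'.symm.one_div_nonneg hpp'.one_div_nonneg,
      hpp'.symm.one_div_add_one_div, div_one, ENNReal.rpow_one]
  rwa [← ENNReal.mul_le_mul_iff_right (by simp [ENNReal.rpow_eq_zero_iff, hA0, hfin])
    (ENNReal.rpow_ne_top_of_nonneg hpp'.symm.one_div_nonneg hfin), hA']

lemma volume_inter_Ioi_eq_sub {A : Set ℝ} (hA : ∀ ⦃x y⦄, 0 < y → y ≤ x → x ∈ A → y ∈ A)
    {t : ℝ} (ht : 0 ≤ t) : volume (A ∩ Ioi t) = volume (A ∩ Ioi 0) - ENNReal.ofReal t := by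
  have hsplit := measure_inter_add_sdiff (μ := volume) (A ∩ Ioi 0) (measurableSet_Ioi (a := t))
  rw [inter_assoc, Ioi_inter_Ioi, max_eq_right ht] at hsplit
  by_cases hbig : ∃ x ∈ A, t < x
  · obtain ⟨x, hxA, htx⟩ := hbig
    have hlow : (A ∩ Ioi 0) \ Ioi t = Ioc 0 t := by
      ext y
      simp only [mem_sdiff, mem_inter_iff, mem_Ioi, not_lt, mem_Ioc]
      exact ⟨fun h => ⟨h.1.2, h.2⟩, fun h => ⟨⟨hA h.1 (h.2.trans htx.le) hxA, h.1⟩, h.2⟩⟩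
    rw [hlow, Real.volume_Ioc, sub_zero] at hsplit
    exact ENNReal.eq_sub_of_add_eq ENNReal.ofReal_ne_top hsplit
  · simp only [not_exists, not_and, not_lt] at hbig
    have hempty : A ∩ Ioi t = ∅ := eq_empty_of_forall_notMem fun x hx => (hbig x hx.1).not_gt hx.2
    have hsmall : volume (A ∩ Ioi 0) ≤ ENNReal.ofReal t := by
      rw [← sub_zero t, ← Real.volume_Ioc]
      exact measure_mono fun x hx => ⟨hx.2, hbig x hx.1⟩
    rw [hempty, measure_empty, tsub_eq_zero_of_le hsmall]

lemma setLIntegral_Ioi_indicator_Iio (x : ℝ) :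
    ∫⁻ l in Ioi 0, (Iio x).indicator 1 l = ENNReal.ofReal x := by
  rw [lintegral_indicator_one measurableSet_Iio, Measure.restrict_apply measurableSet_Iio,
    Iio_inter_Ioi, Real.volume_Ioo, sub_zero]

lemma indicator_Iio_apply_eq_indicator_setOf {α : Type*} (f : α → ℝ) (s : α) (l : ℝ) :
    (Iio (f s)).indicator (1 : ℝ → ℝ≥0∞) l = {s | l < f s}.indicator 1 s := by
  simp only [indicator_apply, mem_Iio, mem_ofPred_eq, Pi.one_apply]

lemma measurable_uncurry_indicator_Iio {α : Type*} [MeasurableSpace α] {f : α → ℝ}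
    (hf : Measurable f) :
    Measurable (uncurry fun s l => (Iio (f s)).indicator (1 : ℝ → ℝ≥0∞) l) := by
  have : (uncurry fun s l => (Iio (f s)).indicator (1 : ℝ → ℝ≥0∞) l) =
      {p : α × ℝ | p.2 < f p.1}.indicator 1 := by
    ext ⟨s, l⟩
    simp only [uncurry_apply_pair, indicator_apply, mem_Iio, mem_ofPred_eq, Pi.one_apply]
  rw [this]
  exact measurable_one.indicator (measurableSet_lt measurable_snd (hf.comp measurable_fst))

lemma lintegral_ofReal_eq_lintegral_meas_lt {α : Type*} [MeasurableSpace α] (μ : Measure α)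
    [SFinite μ] {f : α → ℝ} (hf : Measurable f) :
    ∫⁻ s, ENNReal.ofReal (f s) ∂μ = ∫⁻ l in Ioi 0, μ {s | l < f s} :=
  calc ∫⁻ s, ENNReal.ofReal (f s) ∂μ = ∫⁻ s, (∫⁻ l in Ioi 0, (Iio (f s)).indicator 1 l) ∂μ := by
        simp_rw [setLIntegral_Ioi_indicator_Iio]
    _ = ∫⁻ l in Ioi 0, ∫⁻ s, (Iio (f s)).indicator 1 l ∂μ :=
        lintegral_lintegral_swap (measurable_uncurry_indicator_Iio hf).aemeasurable
    _ = ∫⁻ l in Ioi 0, μ {s | l < f s} := by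
        simp_rw [indicator_Iio_apply_eq_indicator_setOf,
          lintegral_indicator_one (measurableSet_lt measurable_const hf)]

lemma lintegral_Ioi_rpow_ne_top_of_antitoneOn {f : ℝ → ℝ} {q t : ℝ} (hq : 1 ≤ q)
    (hmono : AntitoneOn f (Ioi 0)) (ht : 0 < t) (hI : ∫⁻ s in Ioi 0, ENNReal.ofReal (f s) ≠ ∞) :
    ∫⁻ s in Ioi t, ENNReal.ofReal (f s) ^ q ≠ ∞ := by
  have hft : ENNReal.ofReal (f t) ^ (q - 1) ≠ ∞ :=
    ENNReal.rpow_ne_top_of_nonneg (sub_nonneg.2 hq) ENNReal.ofReal_ne_top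
  refine ne_top_of_le_ne_top (ENNReal.mul_ne_top hft hI) ?_
  calc ∫⁻ s in Ioi t, ENNReal.ofReal (f s) ^ q
      ≤ ∫⁻ s in Ioi t, ENNReal.ofReal (f t) ^ (q - 1) * ENNReal.ofReal (f s) := by
        refine setLIntegral_mono' measurableSet_Ioi fun s hs => ?_
        rw [ENNReal.rpow_eq_rpow_sub_one_mul _ hq]
        gcongr
        exact hmono ht (ht.trans hs) hs.le
    _ = ENNReal.ofReal (f t) ^ (q - 1) * ∫⁻ s in Ioi t, ENNReal.ofReal (f s) :=
        lintegral_const_mul' _ _ hft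
    _ ≤ ENNReal.ofReal (f t) ^ (q - 1) * ∫⁻ s in Ioi 0, ENNReal.ofReal (f s) := by
        gcongr

lemma rpow_lintegral_Ioi_rpow_le_of_antitoneOn {f : ℝ → ℝ} {q t : ℝ} (hq : 1 < q)
    (hf : Measurable f) (hmono : AntitoneOn f (Ioi 0)) (ht : 0 ≤ t)
    (hfin : ∫⁻ s in Ioi t, ENNReal.ofReal (f s) ^ q ≠ ∞) :
    (∫⁻ s in Ioi t, ENNReal.ofReal (f s) ^ q) ^ (1 / q) ≤
      ∫⁻ l in Ioi 0, (volume ({s | l < f s} ∩ Ioi 0) - ENNReal.ofReal t) ^ (1 / q) := by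
  have h := ENNReal.lintegral_Lp_lintegral_le (μ := volume.restrict (Ioi t))
    (ν := volume.restrict (Ioi 0)) hq (measurable_uncurry_indicator_Iio hf)
    (by simpa only [setLIntegral_Ioi_indicator_Iio] using hfin)
  simp only [setLIntegral_Ioi_indicator_Iio] at h
  refine h.trans_eq (setLIntegral_congr_fun measurableSet_Ioi fun l _ => ?_)
  have hlevel : ∀ ⦃x y⦄, 0 < y → y ≤ x → x ∈ {s | l < f s} → y ∈ {s | l < f s} :=
    fun x y hy hyx hx => lt_of_lt_of_le hx (hmono hy (hy.trans_le hyx) hyx)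
  have hpow (s : ℝ) :
      (Iio (f s)).indicator 1 l ^ q = {s | l < f s}.indicator (1 : ℝ → ℝ≥0∞) s := by
    rw [indicator_Iio_apply_eq_indicator_setOf]
    by_cases hs : l < f s <;> simp [hs, ENNReal.zero_rpow_of_pos (zero_lt_one.trans hq)]
  rw [lintegral_congr hpow, lintegral_indicator_one (measurableSet_lt measurable_const hf),
    Measure.restrict_apply (measurableSet_lt measurable_const hf),
    volume_inter_Ioi_eq_sub hlevel ht]

lemma stechkin_le {f : ℝ → ℝ} {q : ℝ} (hq : 1 < q) (hf : Measurable f)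
    (hmono : AntitoneOn f (Ioi 0)) :
    ∫⁻ t in Ioi 0, ((1 / ENNReal.ofReal t) * ∫⁻ s in Ioi t, ENNReal.ofReal (f s) ^ q) ^ (1 / q) ≤
      ENNReal.ofReal (π / (q * sin (π / q))) * ∫⁻ t in Ioi 0, ENNReal.ofReal (f t) := by
  set m : ℝ → ℝ≥0∞ := fun l => volume ({s | l < f s} ∩ Ioi 0)
  have hq0 : 0 < 1 / q := one_div_pos.2 (zero_lt_one.trans hq)
  have hq1 : 1 / q < 1 := (div_lt_one (zero_lt_one.trans hq)).2 hq
  rw [← beta_one_sub_inv_one_add_inv (zero_lt_one.trans hq).ne']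
  rcases eq_or_ne (∫⁻ t in Ioi 0, ENNReal.ofReal (f t)) ∞ with hI | hI
  · have hB : 0 < beta (1 - 1 / q) (1 + 1 / q) := beta_pos (by linarith) (by linarith)
    rw [hI, ENNReal.mul_top (by simpa using hB)]
    exact le_top
  have hm : Measurable m := Antitone.measurable fun a b hab =>
    measure_mono (inter_subset_inter_left _ fun s hs => lt_of_le_of_lt hab hs)
  calc ∫⁻ t in Ioi 0, ((1 / ENNReal.ofReal t) * ∫⁻ s in Ioi t, ENNReal.ofReal (f s) ^ q) ^ (1 / q)
      = ∫⁻ t in Ioi 0, (1 / ENNReal.ofReal t) ^ (1 / q) *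
          (∫⁻ s in Ioi t, ENNReal.ofReal (f s) ^ q) ^ (1 / q) :=
        lintegral_congr fun t => ENNReal.mul_rpow_of_nonneg _ _ hq0.le
    _ ≤ ∫⁻ t in Ioi 0, (1 / ENNReal.ofReal t) ^ (1 / q) *
          ∫⁻ l in Ioi 0, (m l - ENNReal.ofReal t) ^ (1 / q) :=
        setLIntegral_mono' measurableSet_Ioi fun t ht => by
          gcongr
          exact rpow_lintegral_Ioi_rpow_le_of_antitoneOn hq hf hmono (le_of_lt ht)
            (lintegral_Ioi_rpow_ne_top_of_antitoneOn hq.le hmono ht hI)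
    _ = ∫⁻ t in Ioi 0, ∫⁻ l in Ioi 0, (1 / ENNReal.ofReal t) ^ (1 / q) *
          (m l - ENNReal.ofReal t) ^ (1 / q) :=
        lintegral_congr fun t => (lintegral_const_mul _ (by fun_prop)).symm
    _ = ∫⁻ l in Ioi 0, ∫⁻ t in Ioi 0, (1 / ENNReal.ofReal t) ^ (1 / q) *
          (m l - ENNReal.ofReal t) ^ (1 / q) :=
        lintegral_lintegral_swap (by fun_prop)
    _ = ∫⁻ l in Ioi 0, ENNReal.ofReal (beta (1 - 1 / q) (1 + 1 / q)) * m l :=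
        lintegral_congr fun l => lintegral_Ioi_one_div_rpow_mul_sub_rpow hq0 hq1 (m l)
    _ = ENNReal.ofReal (beta (1 - 1 / q) (1 + 1 / q)) * ∫⁻ t in Ioi 0, ENNReal.ofReal (f t) := by
        rw [lintegral_const_mul _ hm, lintegral_ofReal_eq_lintegral_meas_lt _ hf]
        simp_rw [m, Measure.restrict_apply (measurableSet_lt measurable_const hf)]

lemma stechkin_indicator_Ioo_eq {q T : ℝ} (hq : 1 < q) (hT : 0 < T) :
    ∫⁻ t in Ioi 0, ((1 / ENNReal.ofReal t) * ∫⁻ s in Ioi t,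
        ENNReal.ofReal ((Ioo 0 T).indicator (fun _ => 1 / T) s) ^ q) ^ (1 / q) =
      ENNReal.ofReal (π / (q * sin (π / q))) *
        ∫⁻ t in Ioi 0, ENNReal.ofReal ((Ioo 0 T).indicator (fun _ => 1 / T) t) := by
  set c := ENNReal.ofReal (1 / T)
  have hq0 : 0 < q := zero_lt_one.trans hq
  have hpow (r : ℝ) (hr : 0 < r) (s : ℝ) :
      ENNReal.ofReal ((Ioo 0 T).indicator (fun _ => 1 / T) s) ^ r =
        (Ioo 0 T).indicator (fun _ => c ^ r) s := by
    by_cases hs : s ∈ Ioo 0 T <;> simp [hs, c, ENNReal.zero_rpow_of_pos hr]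
  have hvolume : volume (Ioo 0 T ∩ Ioi 0) = ENNReal.ofReal T := by
    rw [inter_eq_left.2 Ioo_subset_Ioi_self, Real.volume_Ioo, sub_zero]
  have hcT : c * ENNReal.ofReal T = 1 := by
    rw [← ENNReal.ofReal_mul (by positivity), one_div_mul_cancel hT.ne', ENNReal.ofReal_one]
  have htail : ∀ t ∈ Ioi (0 : ℝ), ((1 / ENNReal.ofReal t) * ∫⁻ s in Ioi t,
        ENNReal.ofReal ((Ioo 0 T).indicator (fun _ => 1 / T) s) ^ q) ^ (1 / q) =
      c * ((1 / ENNReal.ofReal t) ^ (1 / q) *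
        (ENNReal.ofReal T - ENNReal.ofReal t) ^ (1 / q)) := by
    intro t ht
    rw [lintegral_congr (hpow q hq0), lintegral_indicator_const measurableSet_Ioo,
      Measure.restrict_apply measurableSet_Ioo,
      volume_inter_Ioi_eq_sub (A := Ioo 0 T) (fun x y hy hyx hx => ⟨hy, hyx.trans_lt hx.2⟩)
        (le_of_lt ht),
      hvolume, mul_left_comm, ENNReal.mul_rpow_of_nonneg _ _ (by positivity),
      ENNReal.mul_rpow_of_nonneg _ _ (by positivity), ← ENNReal.rpow_mul,
      mul_one_div_cancel hq0.ne', ENNReal.rpow_one]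
  rw [setLIntegral_congr_fun measurableSet_Ioi htail,
    lintegral_const_mul' _ _ ENNReal.ofReal_ne_top,
    lintegral_Ioi_one_div_rpow_mul_sub_rpow (by positivity) ((div_lt_one hq0).2 hq),
    beta_one_sub_inv_one_add_inv hq0.ne', mul_left_comm, hcT, mul_one]
  have hind (s : ℝ) : ENNReal.ofReal ((Ioo 0 T).indicator (fun _ => 1 / T) s) =
      (Ioo 0 T).indicator (fun _ => c) s := by
    simpa using hpow 1 one_pos s
  rw [lintegral_congr hind, lintegral_indicator_const measurableSet_Ioo,
    Measure.restrict_apply measurableSet_Ioo, hvolume, hcT, mul_one]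

/-- Strong continuous Stechkin inequality with the optimal constant `π/(q sin(π/q))`,
optimality witnessed by `f = (1/T)·χ_{(0,T)}` for every `T > 0`. -/
theorem stechkin_strong_continuous (q : ℝ) (hq : 1 < q) :
    (∀ f : ℝ → ℝ, Measurable f → (∀ t, 0 < t → 0 ≤ f t) → AntitoneOn f (Set.Ioi 0) →
      (∫⁻ t in Set.Ioi (0 : ℝ),
          ((1 / ENNReal.ofReal t) * ∫⁻ s in Set.Ioi t, ENNReal.ofReal (f s) ^ q) ^ (1 / q)) ≤
        ENNReal.ofReal (π / (q * Real.sin (π / q))) *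
          ∫⁻ t in Set.Ioi (0 : ℝ), ENNReal.ofReal (f t)) ∧
    (∀ T : ℝ, 0 < T →
      (∫⁻ t in Set.Ioi (0 : ℝ),
          ((1 / ENNReal.ofReal t) * ∫⁻ s in Set.Ioi t,
            ENNReal.ofReal (Set.indicator (Set.Ioo 0 T) (fun _ => 1 / T) s) ^ q) ^ (1 / q)) =
        ENNReal.ofReal (π / (q * Real.sin (π / q))) *
          ∫⁻ t in Set.Ioi (0 : ℝ),
            ENNReal.ofReal (Set.indicator (Set.Ioo 0 T) (fun _ => 1 / T) t)) :=
  ⟨fun _ hf _ hmono => stechkin_le hq hf hmono, fun _ hT => stechkin_indicator_Ioo_eq hq hT⟩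
end

section
/- Let 1 < q < ∞. For every monotonically decreasing f : (0,∞) → [0,∞): (i) sup_{t>0} t·(1/t · ∫_t^∞ f(s)^q ds)^{1/q} ≤ (q−1)^{−1/q} · sup_{t>0} t·f(t) with optimal constant (q−1)^{−1/q}; (ii) sup_{t>0} t·f(t) ≤ (1/q)^{−1/q}·(1−1/q)^{−(1−1/q)} · sup_{t>0} t·(1/t · ∫_t^∞ f(s)^q ds)^{1/q} with optimal constant (1/q)^{−1/q}(1−1/q)^{−(1−1/q)}. -/
open Real MeasureTheory
open scoped ENNReal

/-!
If `t f(t) ≤ M` for all `t > 0`, then `f(s) ≤ M / s`, and integrating `s ^ (-q)` over `(t, ∞)` gives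
(i), with equality for `f(s) = 1 / s`. For (ii), monotonicity gives `∫_a^∞ f^q ≥ (t - a) f(t)^q`
for `0 < a < t`, so the tail mean at `a` is at least `a^(1-1/q) (t-a)^(1/q) f(t)`. By weighted AM-GM
this factor is at most `(1-1/q)^(1-1/q) (1/q)^(1/q) t`, with equality at `a = (1-1/q) t`; the same
computation evaluates the tail means of `(1/T) χ_(0,T)`.
-/

open Set

noncomputable def tailMean (q : ℝ) (f : ℝ → ℝ) (t : ℝ) : ℝ≥0∞ :=
  ENNReal.ofReal t * ((1 / ENNReal.ofReal t) * ∫⁻ s in Ioi t, ENNReal.ofReal (f s) ^ q) ^ (1 / q)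

noncomputable def tailNorm (q : ℝ) (f : ℝ → ℝ) : ℝ≥0∞ :=
  ⨆ t : {t : ℝ // 0 < t}, tailMean q f t.1

noncomputable def weakNorm (f : ℝ → ℝ) : ℝ≥0∞ :=
  ⨆ t : {t : ℝ // 0 < t}, ENNReal.ofReal (t.1 * f t.1)

lemma rpow_mul_rpow_sub_le {θ p a t : ℝ} (hθ : 0 < θ) (hp : 0 < p) (hθp : θ + p = 1)
    (ha : 0 ≤ a) (hat : a ≤ t) :
    a ^ θ * (t - a) ^ p ≤ θ ^ θ * p ^ p * t := by
  have h := Real.geom_mean_le_arith_mean2_weighted hθ.le hp.le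
    (div_nonneg ha hθ.le) (div_nonneg (sub_nonneg.mpr hat) hp.le) hθp
  rw [mul_div_cancel₀ a hθ.ne', mul_div_cancel₀ (t - a) hp.ne', add_sub_cancel,
    Real.div_rpow ha hθ.le, Real.div_rpow (sub_nonneg.mpr hat) hp.le, div_mul_div_comm,
    div_le_iff₀ (by positivity)] at h
  linarith

lemma rpow_mul_rpow_sub_eq {θ p t : ℝ} (hθ : 0 ≤ θ) (hp : 0 ≤ p) (hθp : θ + p = 1)
    (ht : 0 ≤ t) :
    (θ * t) ^ θ * (t - θ * t) ^ p = θ ^ θ * p ^ p * t := by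
  rw [show t - θ * t = p * t by linear_combination (-t) * hθp, Real.mul_rpow hθ ht,
    Real.mul_rpow hp ht]
  calc θ ^ θ * t ^ θ * (p ^ p * t ^ p) = θ ^ θ * p ^ p * t ^ (θ + p) := by
        rw [Real.rpow_add' ht (by rw [hθp]; exact one_ne_zero)]; ring
    _ = θ ^ θ * p ^ p * t := by rw [hθp, Real.rpow_one]

lemma ofReal_mul_inv_mul_rpow {q a L : ℝ} (hq : 0 < q) (ha : 0 < a) (hL : 0 ≤ L) :
    ENNReal.ofReal a * ((1 / ENNReal.ofReal a) * ENNReal.ofReal L) ^ (1 / q) =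
      ENNReal.ofReal (a ^ (1 - 1 / q) * L ^ (1 / q)) := by
  rw [one_div (ENNReal.ofReal a), ← ENNReal.ofReal_inv_of_pos ha,
    ← ENNReal.ofReal_mul (by positivity),
    ENNReal.ofReal_rpow_of_nonneg (by positivity) (by positivity), ← ENNReal.ofReal_mul ha.le,
    Real.mul_rpow (by positivity) hL, Real.inv_rpow ha.le, ← Real.rpow_neg ha.le, ← mul_assoc,
    sub_eq_add_neg, Real.rpow_add ha, Real.rpow_one]

lemma ofReal_mul_inv_mul_rpow_mul {q a : ℝ} (hq : 0 < q) (M I : ℝ≥0∞) :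
    ENNReal.ofReal a * ((1 / ENNReal.ofReal a) * (M ^ q * I)) ^ (1 / q) =
      M * (ENNReal.ofReal a * ((1 / ENNReal.ofReal a) * I) ^ (1 / q)) := by
  rw [mul_left_comm (1 / ENNReal.ofReal a), ENNReal.mul_rpow_of_nonneg _ _ (by positivity),
    ← ENNReal.rpow_mul, mul_one_div_cancel hq.ne', ENNReal.rpow_one, mul_left_comm]

lemma lintegral_Ioi_inv_rpow {q t : ℝ} (hq : 1 < q) (ht : 0 < t) :
    ∫⁻ s in Ioi t, ENNReal.ofReal (1 / s) ^ q = ENNReal.ofReal (t ^ (1 - q) / (q - 1)) := by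
  have hpow : EqOn (fun s : ℝ ↦ ENNReal.ofReal (1 / s) ^ q) (fun s ↦ ENNReal.ofReal (s ^ (-q)))
      (Ioi t) := fun s hs ↦ by
    have hs0 : 0 < s := ht.trans hs
    dsimp only
    rw [ENNReal.ofReal_rpow_of_pos (by positivity), one_div, Real.inv_rpow hs0.le,
      Real.rpow_neg hs0.le]
  have hnonneg : 0 ≤ᵐ[volume.restrict (Ioi t)] fun s : ℝ ↦ s ^ (-q) := by
    filter_upwards [ae_restrict_mem measurableSet_Ioi] with s hs
    exact Real.rpow_nonneg (ht.trans hs).le _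
  rw [setLIntegral_congr_fun measurableSet_Ioi hpow,
    ← ofReal_integral_eq_lintegral_ofReal (integrableOn_Ioi_rpow_of_lt (by linarith) ht) hnonneg,
    integral_Ioi_rpow_of_lt (by linarith) ht, neg_add_eq_sub, neg_div, ← div_neg, neg_sub]

lemma tailMean_inv {q t : ℝ} (hq : 1 < q) (ht : 0 < t) :
    tailMean q (fun s ↦ 1 / s) t = ENNReal.ofReal ((q - 1) ^ (-(1 / q))) := by
  have hq1 : 0 < q - 1 := by linarith
  rw [tailMean, lintegral_Ioi_inv_rpow hq ht,
    ofReal_mul_inv_mul_rpow (by linarith) ht (by positivity),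
    Real.div_rpow (by positivity) hq1.le, ← Real.rpow_mul ht.le, Real.rpow_neg hq1.le,
    ← mul_div_assoc, ← Real.rpow_add ht,
    show 1 - 1 / q + (1 - q) * (1 / q) = 0 by field_simp; ring, Real.rpow_zero, one_div]

lemma ofReal_le_weakNorm_mul (f : ℝ → ℝ) {s : ℝ} (hs : 0 < s) :
    ENNReal.ofReal (f s) ≤ weakNorm f * ENNReal.ofReal (1 / s) :=
  calc ENNReal.ofReal (f s) = ENNReal.ofReal (s * f s) * ENNReal.ofReal (1 / s) := by
        rw [← ENNReal.ofReal_mul' (by positivity)]; field_simp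
    _ ≤ weakNorm f * ENNReal.ofReal (1 / s) := by
        gcongr
        exact le_iSup (fun u : {t : ℝ // 0 < t} ↦ ENNReal.ofReal (u.1 * f u.1)) ⟨s, hs⟩

lemma tailMean_le_weakNorm {q t : ℝ} (hq : 1 < q) (f : ℝ → ℝ) (ht : 0 < t) :
    tailMean q f t ≤ ENNReal.ofReal ((q - 1) ^ (-(1 / q))) * weakNorm f := by
  have hq0 : 0 < q := by linarith
  calc tailMean q f t
      ≤ ENNReal.ofReal t * ((1 / ENNReal.ofReal t) *
          ∫⁻ s in Ioi t, weakNorm f ^ q * ENNReal.ofReal (1 / s) ^ q) ^ (1 / q) := by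
        unfold tailMean
        gcongr ENNReal.ofReal t * ((1 / ENNReal.ofReal t) * ?_) ^ (1 / q)
        refine setLIntegral_mono' measurableSet_Ioi fun s hs ↦ ?_
        rw [← ENNReal.mul_rpow_of_nonneg _ _ hq0.le]
        exact ENNReal.rpow_le_rpow (ofReal_le_weakNorm_mul f (ht.trans hs)) hq0.le
    _ = weakNorm f * tailMean q (fun s ↦ 1 / s) t := by
        rw [lintegral_const_mul _ (by fun_prop), ofReal_mul_inv_mul_rpow_mul hq0]
        rfl
    _ = _ := by rw [tailMean_inv hq ht, mul_comm]

lemma rpow_mul_ofReal_sub_le_lintegral {q a t : ℝ} {f : ℝ → ℝ} (hq : 0 ≤ q)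
    (hf : AntitoneOn f (Ioi 0)) (ha : 0 < a) (hat : a < t) :
    ENNReal.ofReal (f t) ^ q * ENNReal.ofReal (t - a) ≤
      ∫⁻ s in Ioi a, ENNReal.ofReal (f s) ^ q :=
  calc ENNReal.ofReal (f t) ^ q * ENNReal.ofReal (t - a)
      = ∫⁻ _ in Ioo a t, ENNReal.ofReal (f t) ^ q := by
        rw [setLIntegral_const, Real.volume_Ioo]
    _ ≤ ∫⁻ s in Ioo a t, ENNReal.ofReal (f s) ^ q := by
        refine setLIntegral_mono' measurableSet_Ioo fun s hs ↦ ?_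
        gcongr
        exact hf (ha.trans hs.1) (ha.trans hat) hs.2.le
    _ ≤ ∫⁻ s in Ioi a, ENNReal.ofReal (f s) ^ q := lintegral_mono_set Ioo_subset_Ioi_self

lemma ofReal_mul_le_tailMean {q a t : ℝ} {f : ℝ → ℝ} (hq : 0 < q)
    (hf : AntitoneOn f (Ioi 0)) (ha : 0 < a) (hat : a < t) :
    ENNReal.ofReal (f t) * ENNReal.ofReal (a ^ (1 - 1 / q) * (t - a) ^ (1 / q)) ≤
      tailMean q f a :=
  calc _ = ENNReal.ofReal a * ((1 / ENNReal.ofReal a) *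
        (ENNReal.ofReal (f t) ^ q * ENNReal.ofReal (t - a))) ^ (1 / q) := by
        rw [ofReal_mul_inv_mul_rpow_mul hq, ofReal_mul_inv_mul_rpow hq ha (by linarith)]
    _ ≤ tailMean q f a := by
        unfold tailMean
        gcongr
        exact rpow_mul_ofReal_sub_le_lintegral hq.le hf ha hat

lemma rpow_neg_mul_rpow_neg_mul_rpow_mul_rpow {x y a b : ℝ} (hx : 0 < x) (hy : 0 < y) :
    x ^ (-a) * y ^ (-b) * (y ^ b * x ^ a) = 1 := by
  rw [Real.rpow_neg hx.le, Real.rpow_neg hy.le]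
  field_simp

lemma weakNorm_le_tailNorm {q : ℝ} (hq : 1 < q) {f : ℝ → ℝ} (hf : AntitoneOn f (Ioi 0)) :
    weakNorm f ≤ ENNReal.ofReal ((1 / q) ^ (-(1 / q)) * (1 - 1 / q) ^ (-(1 - 1 / q))) *
      tailNorm q f := by
  have hq0 : 0 < q := by linarith
  have hp : 0 < 1 / q := by positivity
  have hθ : 0 < 1 - 1 / q := by rw [sub_pos, div_lt_one hq0]; exact hq
  have hconst := rpow_neg_mul_rpow_neg_mul_rpow_mul_rpow (a := 1 / q) (b := 1 - 1 / q) hp hθ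
  refine iSup_le fun ⟨t, ht⟩ ↦ ?_
  have hθt : (1 - 1 / q) * t < t := by nlinarith
  calc ENNReal.ofReal (t * f t)
      = ENNReal.ofReal ((1 / q) ^ (-(1 / q)) * (1 - 1 / q) ^ (-(1 - 1 / q))) *
          (ENNReal.ofReal (f t) * ENNReal.ofReal (((1 - 1 / q) * t) ^ (1 - 1 / q) *
            (t - (1 - 1 / q) * t) ^ (1 / q))) := by
        rw [rpow_mul_rpow_sub_eq hθ.le hp.le (by ring) ht.le, ← ENNReal.ofReal_mul' (by positivity),
          ← ENNReal.ofReal_mul (by positivity)]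
        congr 1
        linear_combination (-(f t * t)) * hconst
    _ ≤ ENNReal.ofReal ((1 / q) ^ (-(1 / q)) * (1 - 1 / q) ^ (-(1 - 1 / q))) *
          tailMean q f ((1 - 1 / q) * t) := by
        gcongr
        exact ofReal_mul_le_tailMean hq0 hf (by positivity) hθt
    _ ≤ _ := by
        gcongr
        exact le_iSup (fun u : {t : ℝ // 0 < t} ↦ tailMean q f u.1) ⟨_, by positivity⟩

lemma weakNorm_inv : weakNorm (fun t ↦ 1 / t) = 1 := by
  rw [weakNorm,
    iSup_congr fun t : {t : ℝ // 0 < t} ↦ by rw [mul_one_div_cancel t.2.ne', ENNReal.ofReal_one],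
    iSup_const]

lemma tailNorm_inv {q : ℝ} (hq : 1 < q) :
    tailNorm q (fun s ↦ 1 / s) = ENNReal.ofReal ((q - 1) ^ (-(1 / q))) := by
  rw [tailNorm, iSup_congr fun t : {t : ℝ // 0 < t} ↦ tailMean_inv hq t.2, iSup_const]

lemma weakNorm_indicator {T : ℝ} (hT : 0 < T) :
    weakNorm (indicator (Ioo 0 T) fun _ ↦ 1 / T) = 1 := by
  unfold weakNorm
  refine le_antisymm (iSup_le fun ⟨t, ht⟩ ↦ ?_) (le_of_forall_lt fun c hc ↦ ?_)
  · by_cases htT : t < T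
    · rw [indicator_of_mem (show t ∈ Ioo 0 T from ⟨ht, htT⟩), mul_one_div, ENNReal.ofReal_le_one,
        div_le_one hT]
      exact htT.le
    · simp [indicator_of_notMem fun h : t ∈ Ioo 0 T ↦ htT h.2]
  · obtain ⟨r, -, hcr, hr1⟩ := ENNReal.lt_iff_exists_real_btwn.mp hc
    have hr0 : 0 < r := ENNReal.ofReal_pos.mp (hcr.trans_le' zero_le)
    have hrT : r * T < T := by nlinarith [ENNReal.ofReal_lt_one.mp hr1]
    refine hcr.trans_le (le_iSup_of_le ⟨r * T, by positivity⟩ ?_)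
    rw [indicator_of_mem (show r * T ∈ Ioo 0 T from ⟨by positivity, hrT⟩), mul_one_div,
      mul_div_cancel_right₀ r hT.ne']

lemma lintegral_Ioi_indicator {q t T : ℝ} (hq : 0 < q) (ht : 0 < t) :
    ∫⁻ s in Ioi t, ENNReal.ofReal (indicator (Ioo 0 T) (fun _ ↦ 1 / T) s) ^ q =
      ENNReal.ofReal (1 / T) ^ q * ENNReal.ofReal (T - t) := by
  have hcomp : (fun s ↦ ENNReal.ofReal (indicator (Ioo 0 T) (fun _ ↦ 1 / T) s) ^ q) =
      indicator (Ioo 0 T) fun _ ↦ ENNReal.ofReal (1 / T) ^ q :=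
    (indicator_comp_of_zero (g := fun x ↦ ENNReal.ofReal x ^ q) (by simp [hq])).symm
  rw [hcomp, lintegral_indicator measurableSet_Ioo, setLIntegral_const,
    Measure.restrict_apply measurableSet_Ioo, Ioo_inter_Ioi, max_eq_right ht.le, Real.volume_Ioo]

lemma tailMean_indicator {q t T : ℝ} (hq : 0 < q) (ht : 0 < t) (htT : t < T) :
    tailMean q (indicator (Ioo 0 T) fun _ ↦ 1 / T) t =
      ENNReal.ofReal (1 / T) * ENNReal.ofReal (t ^ (1 - 1 / q) * (T - t) ^ (1 / q)) := by
  rw [tailMean, lintegral_Ioi_indicator hq ht, ofReal_mul_inv_mul_rpow_mul hq,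
    ofReal_mul_inv_mul_rpow hq ht (by linarith)]

lemma tailMean_indicator_of_le {q t T : ℝ} (hq : 0 < q) (ht : 0 < t) (hTt : T ≤ t) :
    tailMean q (indicator (Ioo 0 T) fun _ ↦ 1 / T) t = 0 := by
  rw [tailMean, lintegral_Ioi_indicator hq ht, ENNReal.ofReal_of_nonpos (sub_nonpos.mpr hTt),
    mul_zero, mul_zero, ENNReal.zero_rpow_of_pos (by positivity), mul_zero]

lemma tailNorm_indicator {q T : ℝ} (hq : 1 < q) (hT : 0 < T) :
    tailNorm q (indicator (Ioo 0 T) fun _ ↦ 1 / T) =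
      ENNReal.ofReal ((1 - 1 / q) ^ (1 - 1 / q) * (1 / q) ^ (1 / q)) := by
  have hq0 : 0 < q := by linarith
  have hp : 0 < 1 / q := by positivity
  have hθ : 0 < 1 - 1 / q := by rw [sub_pos, div_lt_one hq0]; exact hq
  refine le_antisymm (iSup_le fun ⟨t, ht⟩ ↦ ?_) ?_
  · rcases lt_or_ge t T with htT | hTt
    · rw [tailMean_indicator hq0 ht htT, ← ENNReal.ofReal_mul (by positivity), one_div_mul_eq_div]
      gcongr
      rw [div_le_iff₀ hT]
      exact rpow_mul_rpow_sub_le hθ hp (by ring) ht.le htT.le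
    · rw [tailMean_indicator_of_le hq0 ht hTt]
      exact zero_le
  · refine le_iSup_of_le ⟨(1 - 1 / q) * T, by positivity⟩ (le_of_eq ?_)
    rw [tailMean_indicator hq0 (by positivity) (by nlinarith),
      rpow_mul_rpow_sub_eq hθ.le hp.le (by ring) hT.le, ← ENNReal.ofReal_mul (by positivity)]
    field_simp

/-- Weak continuous Stechkin inequalities with optimal constants `(q−1)^{-1/q}` and
`(1/q)^{-1/q}(1−1/q)^{-(1−1/q)}`; optimality witnessed by `f(t) = 1/t` and by
`f = (1/T)·χ_{(0,T)}` respectively. -/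
theorem weak_stechkin_continuous (q : ℝ) (hq : 1 < q) :
    (∀ f : ℝ → ℝ, Measurable f → (∀ t, 0 < t → 0 ≤ f t) → AntitoneOn f (Set.Ioi 0) →
      (⨆ t : {t : ℝ // 0 < t}, ENNReal.ofReal t.1 *
          ((1 / ENNReal.ofReal t.1) * ∫⁻ s in Set.Ioi t.1, ENNReal.ofReal (f s) ^ q) ^ (1 / q)) ≤
        ENNReal.ofReal ((q - 1) ^ (-(1 / q))) *
          ⨆ t : {t : ℝ // 0 < t}, ENNReal.ofReal (t.1 * f t.1)) ∧
    (⨆ t : {t : ℝ // 0 < t}, ENNReal.ofReal t.1 *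
        ((1 / ENNReal.ofReal t.1) * ∫⁻ s in Set.Ioi t.1,
          ENNReal.ofReal (1 / s) ^ q) ^ (1 / q)) =
      ENNReal.ofReal ((q - 1) ^ (-(1 / q))) *
        ⨆ t : {t : ℝ // 0 < t}, ENNReal.ofReal (t.1 * (1 / t.1)) ∧
    (∀ f : ℝ → ℝ, Measurable f → (∀ t, 0 < t → 0 ≤ f t) → AntitoneOn f (Set.Ioi 0) →
      (⨆ t : {t : ℝ // 0 < t}, ENNReal.ofReal (t.1 * f t.1)) ≤
        ENNReal.ofReal ((1 / q) ^ (-(1 / q)) * (1 - 1 / q) ^ (-(1 - 1 / q))) *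
          ⨆ t : {t : ℝ // 0 < t}, ENNReal.ofReal t.1 *
            ((1 / ENNReal.ofReal t.1) * ∫⁻ s in Set.Ioi t.1,
              ENNReal.ofReal (f s) ^ q) ^ (1 / q)) ∧
    (∀ T : ℝ, 0 < T →
      (⨆ t : {t : ℝ // 0 < t},
          ENNReal.ofReal (t.1 * Set.indicator (Set.Ioo 0 T) (fun _ => 1 / T) t.1)) =
        ENNReal.ofReal ((1 / q) ^ (-(1 / q)) * (1 - 1 / q) ^ (-(1 - 1 / q))) *
          ⨆ t : {t : ℝ // 0 < t}, ENNReal.ofReal t.1 *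
            ((1 / ENNReal.ofReal t.1) * ∫⁻ s in Set.Ioi t.1,
              ENNReal.ofReal (Set.indicator (Set.Ioo 0 T) (fun _ => 1 / T) s) ^ q) ^ (1 / q)) := by
  have hp : 0 < 1 / q := by positivity
  have hθ : 0 < 1 - 1 / q := by rw [sub_pos, div_lt_one (by linarith)]; exact hq
  refine ⟨fun f _ _ _ ↦ iSup_le fun t ↦ tailMean_le_weakNorm hq f t.2, ?_,
    fun f _ _ hf ↦ weakNorm_le_tailNorm hq hf, fun T hT ↦ ?_⟩
  · change tailNorm q _ = _ * weakNorm _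
    rw [tailNorm_inv hq, weakNorm_inv, mul_one]
  · change weakNorm _ = _ * tailNorm q _
    rw [weakNorm_indicator hT, tailNorm_indicator hq hT, ← ENNReal.ofReal_mul (by positivity),
      rpow_neg_mul_rpow_neg_mul_rpow_mul_rpow hp hθ, ENNReal.ofReal_one]
end
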